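/- arXiv:1701.04354 — 11 statements merged into one kernel-verified Lean document; each statement's English description precedes it below -/
import Mathlib

section
/- Assume T_{2n} ≥ τ for every n ∈ ℕ. Let U be a trajectory of the on–off delay system and F its Lyapunov functional. Then for every n ∈ ℕ and every t ∈ (t_{2n+1}, t_{2n+2}) such that t ∉ {t_k − τ : k ∈ ℕ}, the function F is differentiable at t and F′(t) ≤ B_{2n+1} ‖U(t)‖². -/
/-!
Along the trajectory, `d/dt ½‖U‖² = ⟪U, V⟫ + ⟪U(t), 𝓑 U(t - τ)⟫`, which by dissipativity and
Young's inequality is at most `‖𝓑‖ (‖U(t)‖² + ‖U(t - τ)‖²) / 2`, while by the fundamental theorem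
of calculus the delay integral contributes `½ b(t + τ) ‖U(t)‖² - ½ b(t) ‖U(t - τ)‖²`. On an odd
interval `b(t) = ‖𝓑‖ ≥ b(t + τ)`, so the `‖U(t - τ)‖²` terms cancel. Since every off interval is
at least `τ` long, `s ↦ b(s + τ)` has at most one jump on the window `(t_{2n+1} - τ, t_{2n+2})`,
at `t_{2n+2} - τ`; this gives the integrability and, away from the exceptional times, the
continuity needed for the calculus step.
-/

open MeasureTheory Set Filter Topology

theorem hasDerivAt_integral_window {E : Type*} [NormedAddCommGroup E] [NormedSpace ℝ E]
    [CompleteSpace E] {f : ℝ → E} {a b τ r : ℝ} (hf : IntegrableOn f (Ioo a b))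
    (hrτ : r - τ ∈ Ioo a b) (hr : r ∈ Ioo a b)
    (hfrτ : ContinuousAt f (r - τ)) (hfr : ContinuousAt f r) :
    HasDerivAt (fun y => ∫ s in (y - τ)..y, f s) (f r - f (r - τ)) r := by
  have hmeas : ∀ x ∈ Ioo a b, StronglyMeasurableAtFilter f (𝓝 x) := fun x hx =>
    ⟨Ioo a b, Ioo_mem_nhds hx.1 hx.2, hf.aestronglyMeasurable⟩
  have hint : IntervalIntegrable f volume (r - τ) r := intervalIntegrable_iff.2 <|
    hf.mono_set (uIoc_subset_uIcc.trans (ordConnected_Ioo.uIcc_subset hrτ hr))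
  have hendpoints : HasDerivAt (fun y : ℝ => (y - τ, y)) (1, 1) r :=
    ((hasDerivAt_id r).sub_const τ).prodMk (hasDerivAt_id r)
  simpa [Function.comp_def] using
    (intervalIntegral.integral_hasFDerivAt hint (hmeas _ hrτ) (hmeas _ hr) hfrτ hfr
      ).comp_hasDerivAt (f := fun y : ℝ => (y - τ, y)) r hendpoints

theorem ContinuousAt.indicator_Iio {E : Type*} [TopologicalSpace E] [Zero E] {f : ℝ → E}
    {x θ : ℝ} (hf : ContinuousAt f x) (hx : x ≠ θ) : ContinuousAt ((Iio θ).indicator f) x := by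
  rcases hx.lt_or_gt with h | h
  · refine hf.congr ?_
    filter_upwards [Iio_mem_nhds h] with y hy
    rw [indicator_of_mem hy]
  · refine (continuousAt_const (y := (0 : E))).congr ?_
    filter_upwards [Ioi_mem_nhds h] with y hy
    rw [indicator_of_notMem (notMem_Iio.2 (le_of_lt hy))]

theorem hasDerivAt_integral_window_of_eqOn_indicator {E : Type*} [NormedAddCommGroup E]
    [NormedSpace ℝ E] [CompleteSpace E] {g φ : ℝ → E} {a b θ τ r : ℝ}
    (hφ : ContinuousOn φ (Icc a b)) (hg : EqOn g ((Iio θ).indicator φ) (Ioo a b))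
    (hrτ : r - τ ∈ Ioo a b) (hr : r ∈ Ioo a b) (hrτθ : r - τ ≠ θ) (hrθ : r ≠ θ) :
    HasDerivAt (fun y => ∫ s in (y - τ)..y, g s) (g r - g (r - τ)) r := by
  have hint : IntegrableOn g (Ioo a b) :=
    ((hφ.integrableOn_Icc.mono_set Ioo_subset_Icc_self).indicator measurableSet_Iio).congr_fun
      hg.symm measurableSet_Ioo
  have hcont : ∀ x ∈ Ioo a b, x ≠ θ → ContinuousAt g x := fun x hx hxθ =>
    ((hφ.continuousAt (Icc_mem_nhds hx.1 hx.2)).indicator_Iio hxθ).congr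
      (hg.symm.eventuallyEq_of_mem (Ioo_mem_nhds hx.1 hx.2))
  exact hasDerivAt_integral_window hint hrτ hr (hcont _ hrτ hrτθ) (hcont _ hr hrθ)

theorem eqOn_shift_mul_indicator_Iio {b φ : ℝ → ℝ} {t₁ t₂ t₃ τ β : ℝ}
    (hon : ∀ s ∈ Ico t₁ t₂, b s = β) (hoff : ∀ s ∈ Ico t₂ t₃, b s = 0) :
    EqOn (fun s => b (s + τ) * φ s) ((Iio (t₂ - τ)).indicator fun s => β * φ s)
      (Ico (t₁ - τ) (t₃ - τ)) := by
  intro s hs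
  dsimp only
  by_cases h : s < t₂ - τ
  · rw [indicator_of_mem (mem_Iio.2 h), hon (s + τ) ⟨by linarith [hs.1], by linarith⟩]
  · rw [indicator_of_notMem (notMem_Iio.2 (not_lt.1 h)),
      hoff (s + τ) ⟨by linarith, by linarith [hs.2]⟩, zero_mul]

theorem inner_apply_le_opNorm_mul_add_sq {H : Type*} [NormedAddCommGroup H]
    [InnerProductSpace ℝ H] (A : H →L[ℝ] H) (u v : H) :
    inner ℝ u (A v) ≤ ‖A‖ * (‖u‖ ^ 2 + ‖v‖ ^ 2) / 2 := calc
  inner ℝ u (A v) ≤ ‖u‖ * (‖A‖ * ‖v‖) :=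
    (real_inner_le_norm _ _).trans (mul_le_mul_of_nonneg_left (A.le_opNorm v) (norm_nonneg u))
  _ ≤ ‖A‖ * (‖u‖ ^ 2 + ‖v‖ ^ 2) / 2 := by
    nlinarith [mul_nonneg (norm_nonneg A) (sq_nonneg (‖u‖ - ‖v‖))]

theorem stmt_2_general
    {H : Type*} [NormedAddCommGroup H] [InnerProductSpace ℝ H]
    (t : ℕ → ℝ) (ht0 : t 0 = 0) (htmono : StrictMono t)
    (τ : ℝ) (hτ : 0 < τ)
    (B : ℕ → H →L[ℝ] H)
    (hT2nτ : ∀ n : ℕ, τ ≤ t (2*n+1) - t (2*n))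
    (b : ℝ → ℝ)
    (hbeven : ∀ n : ℕ, ∀ s ∈ Set.Ico (t (2*n)) (t (2*n+1)), b s = 0)
    (hbodd : ∀ n : ℕ, ∀ s ∈ Set.Ico (t (2*n+1)) (t (2*n+2)), b s = ‖B n‖)
    (U : ℝ → H) (V : ℝ → H)
    (hUcont : ContinuousOn U (Set.Ici (0:ℝ)))
    (hUodd : ∀ n : ℕ, ∀ s ∈ Set.Ioo (t (2*n+1)) (t (2*n+2)),
      HasDerivAt U (V s + B n (U (s - τ))) s)
    (hdiss : ∀ n : ℕ, ∀ s ∈ Set.Ioo (t (2*n+1)) (t (2*n+2)),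
      (inner ℝ (U s) (V s) : ℝ) ≤ 0)
    :
    ∀ n : ℕ, ∀ r ∈ Set.Ioo (t (2*n+1)) (t (2*n+2)), (∀ k : ℕ, r ≠ t k - τ) →
      ∃ d : ℝ,
        HasDerivAt
          (fun y => (1/2) * ‖U y‖^2 + (1/2) * ∫ s in (y - τ)..y, b (s + τ) * ‖U s‖^2)
          d r ∧
        d ≤ ‖B n‖ * ‖U r‖^2 := by
  intro n r hr hrτ
  have hoff : ∀ s ∈ Ico (t (2*n+2)) (t (2*n+3)), b s = 0 := by
    simpa [mul_add] using hbeven (n + 1)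
  have hgap : τ ≤ t (2*n+3) - t (2*n+2) := by simpa [mul_add] using hT2nτ (n + 1)
  have hstart : 0 ≤ t (2*n+1) - τ := by
    linarith [hT2nτ n, ht0 ▸ htmono.monotone (Nat.zero_le (2*n))]
  have hg := (eqOn_shift_mul_indicator_Iio (φ := fun s => ‖U s‖ ^ 2) (τ := τ) (hbodd n) hoff).mono
    (Ioo_subset_Ico_self.trans (Ico_subset_Ico_right (by linarith)) :
      Ioo (t (2*n+1) - τ) (t (2*n+2)) ⊆ _)
  have hwindow := hasDerivAt_integral_window_of_eqOn_indicator (τ := τ) (r := r)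
    (continuousOn_const.mul ((hUcont.mono fun s hs => hstart.trans hs.1).norm.pow 2)) hg
    ⟨by linarith [hr.1], by linarith [hr.2]⟩ ⟨by linarith [hr.1], hr.2⟩
    (by linarith [hr.2]) (fun h => hrτ (2*n+2) (by linarith))
  refine ⟨_, ((hUodd n r hr).norm_sq.const_mul (1/2)).add (hwindow.const_mul (1/2)), ?_⟩
  have hcoeff_r : b (r + τ) * ‖U r‖ ^ 2 ≤ ‖B n‖ * ‖U r‖ ^ 2 :=
    (hg ⟨by linarith [hr.1], hr.2⟩).trans_le (indicator_le_self' (fun _ _ => by positivity) r)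
  have hcoeff_rτ : b (r - τ + τ) * ‖U (r - τ)‖ ^ 2 = ‖B n‖ * ‖U (r - τ)‖ ^ 2 :=
    (hg ⟨by linarith [hr.1], by linarith [hr.2]⟩).trans
      (indicator_of_mem (mem_Iio.2 (by linarith [hr.2])) _)
  rw [inner_add_right]
  linarith [hdiss n r hr, inner_apply_le_opNorm_mul_add_sq (B n) (U r) (U (r - τ))]

theorem stmt_2
    {H : Type*} [NormedAddCommGroup H] [InnerProductSpace ℝ H]
    (S : ℝ → H →L[ℝ] H) (M μ : ℝ)
    (hM : 1 ≤ M) (hμ : 0 < μ)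
    (hS0 : S 0 = ContinuousLinearMap.id ℝ H)
    (hSadd : ∀ s u : ℝ, 0 ≤ s → 0 ≤ u → S (s + u) = (S s).comp (S u))
    (hScont : ∀ x : H, ContinuousOn (fun s => S s x) (Set.Ici (0:ℝ)))
    (hSbound : ∀ s : ℝ, 0 ≤ s → ‖S s‖ ≤ M * Real.exp (-μ * s))
    (hScontr : ∀ s : ℝ, 0 ≤ s → ∀ x : H, ‖S s x‖ ≤ ‖x‖)
    (t : ℕ → ℝ) (ht0 : t 0 = 0) (htmono : StrictMono t)
    (htlim : Filter.Tendsto t Filter.atTop Filter.atTop)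
    (τ : ℝ) (hτ : 0 < τ)
    (B : ℕ → H →L[ℝ] H)
    (hT2nτ : ∀ n : ℕ, τ ≤ t (2*n+1) - t (2*n))
    (b : ℝ → ℝ)
    (hbneg : ∀ s : ℝ, s < 0 → b s = 0)
    (hbeven : ∀ n : ℕ, ∀ s ∈ Set.Ico (t (2*n)) (t (2*n+1)), b s = 0)
    (hbodd : ∀ n : ℕ, ∀ s ∈ Set.Ico (t (2*n+1)) (t (2*n+2)), b s = ‖B n‖)
    (U : ℝ → H) (U₀ : H) (V : ℝ → H)
    (hUcont : ContinuousOn U (Set.Ici (0:ℝ))) (hU0 : U 0 = U₀)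
    (hUeven : ∀ n : ℕ, ∀ s ∈ Set.Icc (t (2*n)) (t (2*n+1)),
      U s = S (s - t (2*n)) (U (t (2*n))))
    (hUodd : ∀ n : ℕ, ∀ s ∈ Set.Ioo (t (2*n+1)) (t (2*n+2)),
      HasDerivAt U (V s + B n (U (s - τ))) s)
    (hdiss : ∀ n : ℕ, ∀ s ∈ Set.Ioo (t (2*n+1)) (t (2*n+2)),
      (inner ℝ (U s) (V s) : ℝ) ≤ 0)
    :
    ∀ n : ℕ, ∀ r ∈ Set.Ioo (t (2*n+1)) (t (2*n+2)), (∀ k : ℕ, r ≠ t k - τ) →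
      ∃ d : ℝ,
        HasDerivAt
          (fun y => (1/2) * ‖U y‖^2 + (1/2) * ∫ s in (y - τ)..y, b (s + τ) * ‖U s‖^2)
          d r ∧
        d ≤ ‖B n‖ * ‖U r‖^2 :=
  stmt_2_general t ht0 htmono τ hτ B hT2nτ b hbeven hbodd U V hUcont hUodd hdiss
end

section
/- Assume T_{2n} ≥ τ and T_{2n} > T* for all n ∈ ℕ, and set c_n := M² e^{−2μ T_{2n}}. If the partial sums ∑_{n=0}^{N} ln[ e^{2 B_{2n+1} T_{2n+1}} (c_n + T_{2n+1} B_{2n+1}) ] tend to −∞ as N → ∞, then every trajectory U of the on–off delay system is asymptotically stable: ‖U(t)‖ → 0 as t → +∞. -/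
/-! On the semigroup leg `[t₂ₙ, t₂ₙ₊₁]` the norm does not increase, and at its end `‖U‖²` has shrunk
by the factor `cₙ = M² e^{-2μT₂ₙ}`. On the feedback leg, `f = ‖U‖²` satisfies
`f' ≤ β (f(s) + f(s - τ))` with `β = ‖𝓑₂ₙ₊₁‖`. Because `τ ≤ T₂ₙ`, delayed values reach back at most into
the semigroup leg, where `f ≤ f(t₂ₙ)`, and a first-contact comparison argument gives
`f(s) ≤ f(t₂ₙ) e^{2β(s - t₂ₙ₊₁)} (cₙ + β(s - t₂ₙ₊₁))`. So over a whole period `‖U‖²` is multiplied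
by at most the growth factor of the hypothesis, and the product of these factors tends to `0`
because the sum of their logarithms tends to `-∞`. -/

open Set Filter Topology Real

theorem image_le_of_hasDerivAt_lt_at_first_contact {f g f' g' : ℝ → ℝ} {b d : ℝ}
    (hf : ContinuousOn f (Icc b d)) (hg : ContinuousOn g (Icc b d)) (hb : f b < g b)
    (hf' : ∀ x ∈ Ioo b d, HasDerivAt f (f' x) x) (hg' : ∀ x ∈ Ioo b d, HasDerivAt g (g' x) x)
    (hcontact : ∀ x ∈ Ioo b d, (∀ r ∈ Ico b x, f r < g r) → f x = g x → f' x < g' x) :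
    ∀ x ∈ Icc b d, f x ≤ g x := by
  by_contra! ⟨x₀, hx₀, hgf⟩
  obtain ⟨c, ⟨hc, hgfc : g c - f c ≤ 0⟩, hleast⟩ :
      ∃ c, IsLeast (Icc b x₀ ∩ {x | g x - f x ≤ 0}) c := by
    have hclosed : IsClosed (Icc b x₀ ∩ (fun x => g x - f x) ⁻¹' Iic 0) :=
      ((hg.sub hf).mono (Icc_subset_Icc_right hx₀.2)).preimage_isClosed_of_isClosed
        isClosed_Icc isClosed_Iic
    exact (isCompact_Icc.of_isClosed_subset hclosed inter_subset_left).exists_isLeast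
      ⟨x₀, right_mem_Icc.2 hx₀.1, sub_nonpos.2 hgf.le⟩
  have hbc : b < c := hc.1.lt_of_ne (by rintro rfl; linarith [hgfc])
  have hpast : ∀ r ∈ Ico b c, f r < g r := fun r hr =>
    not_le.1 fun h => hr.2.not_ge (hleast ⟨⟨hr.1, hr.2.le.trans hc.2⟩, sub_nonpos.2 h⟩)
  have hcd : c ∈ Icc b d := ⟨hbc.le, hc.2.trans hx₀.2⟩
  have hfgc : f c ≤ g c := by
    have hcl : c ∈ closure (Ico b c) := by rw [closure_Ico hbc.ne]; exact right_mem_Icc.2 hbc.le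
    refine ContinuousWithinAt.closure_le hcl ?_ ?_ fun r hr => (hpast r hr).le
    · exact (hf c hcd).mono (Ico_subset_Icc_self.trans (Icc_subset_Icc_right hcd.2))
    · exact (hg c hcd).mono (Ico_subset_Icc_self.trans (Icc_subset_Icc_right hcd.2))
  have hcx₀ : c < x₀ := hc.2.lt_of_ne (by rintro rfl; linarith)
  have hc' : c ∈ Ioo b d := ⟨hbc, hcx₀.trans_le hx₀.2⟩
  have hlt := hcontact c hc' hpast (le_antisymm hfgc (sub_nonpos.1 hgfc))
  -- `g - f` vanishes at `c`, is positive just before `c`, yet has positive derivative there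
  have hslope := (hasDerivAt_iff_tendsto_slope_left_right.1 ((hg' c hc').sub (hf' c hc'))).1
  obtain ⟨r, hr, hrc⟩ := ((hslope.eventually (lt_mem_nhds (sub_pos.2 hlt))).and
    (Ioo_mem_nhdsLT hbc)).exists
  rw [slope_def_field, Pi.sub_apply, Pi.sub_apply, le_antisymm hfgc (sub_nonpos.1 hgfc), sub_self,
    sub_zero] at hr
  exact (div_neg_of_pos_of_neg (sub_pos.2 (hpast r ⟨hrc.1.le, hrc.2⟩)) (sub_neg.2 hrc.2)).not_gt hr

noncomputable def delayGrowth (β c T : ℝ) : ℝ := exp (2 * β * T) * (c + T * β)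

theorem hasDerivAt_delayGrowth (β c T : ℝ) :
    HasDerivAt (delayGrowth β c) (2 * β * delayGrowth β c T + β * exp (2 * β * T)) T := by
  have h : HasDerivAt (fun T => exp (2 * β * T) * (c + T * β)) _ T :=
    (((hasDerivAt_id' T).const_mul (2 * β)).exp).mul (((hasDerivAt_id' T).mul_const β).const_add c)
  refine h.congr_deriv ?_
  simp only [delayGrowth]
  ring

theorem delayGrowth_nonneg {β c T : ℝ} (hβ : 0 ≤ β) (hc : 0 ≤ c) (hT : 0 ≤ T) :
    0 ≤ delayGrowth β c T := by
  unfold delayGrowth; positivity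

theorem delayGrowth_mono {β c T T' : ℝ} (hβ : 0 ≤ β) (hc : 0 ≤ c) (hT : 0 ≤ T) (hTT' : T ≤ T') :
    delayGrowth β c T ≤ delayGrowth β c T' := by
  unfold delayGrowth
  have : 0 ≤ c + T * β := by positivity
  gcongr

theorem le_mul_delayGrowth_of_deriv_le_delay {f f' : ℝ → ℝ} {b d τ β K c : ℝ}
    (hτ : 0 < τ) (hβ : 0 ≤ β) (hK : 0 ≤ K) (hc : 0 ≤ c)
    (hf : ContinuousOn f (Icc b d)) (hf' : ∀ x ∈ Ioo b d, HasDerivAt f (f' x) x)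
    (hderiv : ∀ x ∈ Ioo b d, f' x ≤ β * (f x + f (x - τ)))
    (hhist : ∀ x ∈ Ioo b d, x - τ ≤ b → f (x - τ) ≤ K) (hfb : f b ≤ K * c) :
    ∀ s ∈ Icc b d, f s ≤ K * delayGrowth β c (s - b) := by
  have hbound : ∀ ε > 0, ∀ s ∈ Icc b d,
      f s ≤ K * delayGrowth β c (s - b) + ε * exp ((2 * β + 1) * (s - b)) := by
    intro ε hε
    -- the `ε`-term makes the comparison of derivatives at a contact point strict
    set g : ℝ → ℝ := fun s => K * delayGrowth β c (s - b) + ε * exp ((2 * β + 1) * (s - b))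
    have hg' (x : ℝ) : HasDerivAt g (K * (2 * β * delayGrowth β c (x - b) + β * exp (2 * β * (x - b)))
        + ε * (exp ((2 * β + 1) * (x - b)) * ((2 * β + 1) * 1))) x :=
      (((hasDerivAt_delayGrowth β c (x - b)).comp_sub_const x b).const_mul K).add
        ((((hasDerivAt_id x).sub_const b).const_mul (2 * β + 1)).exp.const_mul ε)
    have hg_mono : ∀ r s, b ≤ r → r ≤ s → g r ≤ g s := by
      intro r s hbr hrs
      have := delayGrowth_mono hβ hc (sub_nonneg.2 hbr) (sub_le_sub_right hrs b)
      simp only [g]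
      gcongr
    have hg_nonneg : ∀ s, b ≤ s → 0 ≤ g s := fun s hs => by
      have := delayGrowth_nonneg hβ hc (sub_nonneg.2 hs)
      positivity
    refine image_le_of_hasDerivAt_lt_at_first_contact hf
      (fun x _ => (hg' x).continuousAt.continuousWithinAt) ?_ hf'
      (fun x _ => hg' x) fun x hx hpast hfg => ?_
    · simp only [sub_self, delayGrowth, mul_zero, zero_mul, exp_zero, one_mul, add_zero, mul_one]
      linarith
    have hdelay : f (x - τ) ≤ K + g x := by
      rcases le_or_gt (x - τ) b with h | h
      · linarith [hhist x hx h, hg_nonneg x hx.1.le]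
      · linarith [hpast (x - τ) ⟨h.le, by linarith⟩, hg_mono (x - τ) x h.le (by linarith),
          hK]
    have hE : 1 ≤ exp (2 * β * (x - b)) := one_le_exp (by nlinarith [hx.1])
    calc f' x ≤ β * (f x + f (x - τ)) := hderiv x hx
      _ ≤ β * (g x + (K + g x)) := by rw [hfg]; gcongr
      _ < _ := by
        simp only [g]
        nlinarith [mul_nonneg (mul_nonneg hK hβ) (sub_nonneg.2 hE),
          mul_pos hε (exp_pos ((2 * β + 1) * (x - b)))]
  intro s hs
  have hlim : Tendsto (fun ε => K * delayGrowth β c (s - b) + ε * exp ((2 * β + 1) * (s - b)))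
      (𝓝[>] 0) (𝓝 (K * delayGrowth β c (s - b))) :=
    tendsto_nhdsWithin_of_tendsto_nhds (Continuous.tendsto' (by fun_prop) _ _ (by simp))
  exact ge_of_tendsto hlim (eventually_nhdsWithin_of_forall fun ε hε => hbound ε hε s hs)

section OnOffDelay

variable {H : Type*} [NormedAddCommGroup H] [InnerProductSpace ℝ H]

theorem norm_sq_le_of_hasDerivAt_delay {U V : ℝ → H} {L : H →L[ℝ] H} {b d τ K c : ℝ}
    (hτ : 0 < τ) (hK : 0 ≤ K) (hc : 0 ≤ c) (hU : ContinuousOn U (Icc b d))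
    (hU' : ∀ x ∈ Ioo b d, HasDerivAt U (V x + L (U (x - τ))) x)
    (hdiss : ∀ x ∈ Ioo b d, inner ℝ (U x) (V x) ≤ 0)
    (hhist : ∀ x ∈ Ioo b d, x - τ ≤ b → ‖U (x - τ)‖ ^ 2 ≤ K) (hb : ‖U b‖ ^ 2 ≤ K * c) :
    ∀ s ∈ Icc b d, ‖U s‖ ^ 2 ≤ K * delayGrowth ‖L‖ c (s - b) := by
  refine le_mul_delayGrowth_of_deriv_le_delay hτ (norm_nonneg L) hK hc (hU.norm.pow 2)
    (fun x hx => (hU' x hx).norm_sq) (fun x hx => ?_) hhist hb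
  have hLU : inner ℝ (U x) (L (U (x - τ))) ≤ ‖U x‖ * (‖L‖ * ‖U (x - τ)‖) :=
    (real_inner_le_norm _ _).trans (by gcongr; exact L.le_opNorm _)
  rw [inner_add_right]
  nlinarith [hdiss x hx, mul_nonneg (norm_nonneg L) (sq_nonneg (‖U x‖ - ‖U (x - τ)‖))]

theorem norm_sq_le_on_period {S : ℝ → H →L[ℝ] H} {M μ : ℝ}
    (hSbound : ∀ s : ℝ, 0 ≤ s → ‖S s‖ ≤ M * exp (-μ * s))
    (hScontr : ∀ s : ℝ, 0 ≤ s → ∀ x : H, ‖S s x‖ ≤ ‖x‖)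
    {U V : ℝ → H} {L : H →L[ℝ] H} {a b d τ : ℝ} (hτ : 0 < τ) (hτab : τ ≤ b - a) (hbd : b ≤ d)
    (hU : ContinuousOn U (Icc b d)) (hUeven : ∀ s ∈ Icc a b, U s = S (s - a) (U a))
    (hUodd : ∀ x ∈ Ioo b d, HasDerivAt U (V x + L (U (x - τ))) x)
    (hdiss : ∀ x ∈ Ioo b d, inner ℝ (U x) (V x) ≤ 0) :
    (∀ s ∈ Icc a d, ‖U s‖ ^ 2 ≤
      ‖U a‖ ^ 2 * (1 + delayGrowth ‖L‖ (M ^ 2 * exp (-2 * μ * (b - a))) (d - b))) ∧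
    ‖U d‖ ^ 2 ≤ ‖U a‖ ^ 2 * delayGrowth ‖L‖ (M ^ 2 * exp (-2 * μ * (b - a))) (d - b) := by
  have hab : a ≤ b := by linarith
  have hc : 0 ≤ M ^ 2 * exp (-2 * μ * (b - a)) := by positivity
  have hcontr : ∀ s ∈ Icc a b, ‖U s‖ ^ 2 ≤ ‖U a‖ ^ 2 := fun s hs => by
    rw [hUeven s hs]
    gcongr
    exact hScontr _ (sub_nonneg.2 hs.1) _
  have hdecay : ‖U b‖ ^ 2 ≤ ‖U a‖ ^ 2 * (M ^ 2 * exp (-2 * μ * (b - a))) :=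
    calc ‖U b‖ ^ 2 = ‖S (b - a) (U a)‖ ^ 2 := by rw [hUeven b ⟨hab, le_rfl⟩]
      _ ≤ (M * exp (-μ * (b - a)) * ‖U a‖) ^ 2 := by
        gcongr
        exact (S _).le_of_opNorm_le (hSbound _ (sub_nonneg.2 hab)) _
      _ = ‖U a‖ ^ 2 * (M ^ 2 * exp (-2 * μ * (b - a))) := by
        rw [mul_pow, mul_pow, sq (exp _), ← exp_add]
        ring_nf
  have hodd : ∀ s ∈ Icc b d, ‖U s‖ ^ 2 ≤
      ‖U a‖ ^ 2 * delayGrowth ‖L‖ (M ^ 2 * exp (-2 * μ * (b - a))) (d - b) := by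
    intro s hs
    refine (norm_sq_le_of_hasDerivAt_delay hτ (sq_nonneg _) hc hU hUodd hdiss
      (fun x hx hxb => hcontr _ ⟨by linarith [hx.1], hxb⟩) hdecay s hs).trans ?_
    gcongr
    exact delayGrowth_mono (norm_nonneg L) hc (sub_nonneg.2 hs.1) (by linarith [hs.2])
  have hρ := delayGrowth_nonneg (norm_nonneg L) hc (sub_nonneg.2 hbd)
  refine ⟨fun s hs => ?_, hodd d ⟨hbd, le_rfl⟩⟩
  rcases le_total s b with h | h
  · nlinarith [hcontr s ⟨hs.1, h⟩, sq_nonneg ‖U a‖]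
  · nlinarith [hodd s ⟨h, hs.2⟩, sq_nonneg ‖U a‖]

end OnOffDelay

theorem le_mul_prod_range_of_le_mul {x a : ℕ → ℝ} (ha : ∀ n, 0 ≤ a n)
    (h : ∀ n, x (n + 1) ≤ x n * a n) (n : ℕ) : x n ≤ x 0 * ∏ k ∈ Finset.range n, a k := by
  induction n with
  | zero => simp
  | succ n ih =>
    rw [Finset.prod_range_succ, ← mul_assoc]
    exact (h n).trans (mul_le_mul_of_nonneg_right ih (ha n))

theorem tendsto_prod_range_zero_of_sum_log_tendsto_atBot {a : ℕ → ℝ} (ha : ∀ n, 0 ≤ a n)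
    (h : Tendsto (fun N => ∑ n ∈ Finset.range (N + 1), log (a n)) atTop atBot) :
    Tendsto (fun N => ∏ n ∈ Finset.range N, a n) atTop (𝓝 0) := by
  rw [← tendsto_add_atTop_iff_nat 1]
  refine squeeze_zero (fun N => Finset.prod_nonneg fun n _ => ha n) (fun N => ?_)
    (tendsto_exp_atBot.comp h)
  rw [Function.comp_apply, exp_sum]
  exact Finset.prod_le_prod (fun n _ => ha n) fun n _ => le_exp_log _

theorem exists_mem_Ico_of_tendsto_atTop {α : Type*} [LinearOrder α] [NoMaxOrder α] {t : ℕ → α}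
    (htop : Tendsto t atTop atTop) {r : α} (hr : t 0 ≤ r) : ∃ n, r ∈ Ico (t n) (t (n + 1)) := by
  classical
  have hex : ∃ m, r < t m := (htop.eventually_gt_atTop r).exists
  obtain ⟨n, hn⟩ : ∃ n, Nat.find hex = n + 1 :=
    Nat.exists_eq_succ_of_ne_zero fun h => (h ▸ Nat.find_spec hex).not_ge hr
  exact ⟨n, not_lt.1 (Nat.find_min hex (by omega)), hn ▸ Nat.find_spec hex⟩

theorem tendsto_nhds_zero_of_le_on_Ico {t : ℕ → ℝ} (ht : Monotone t)
    (htop : Tendsto t atTop atTop) {u : ℕ → ℝ} (hu : Tendsto u atTop (𝓝 0)) {g : ℝ → ℝ}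
    (hg : ∀ r, 0 ≤ g r) (hgu : ∀ n, ∀ r ∈ Ico (t n) (t (n + 1)), g r ≤ u n) :
    Tendsto g atTop (𝓝 0) := by
  refine tendsto_order.2 ⟨fun ε hε => Eventually.of_forall fun r => hε.trans_le (hg r),
    fun ε hε => ?_⟩
  obtain ⟨N, hN⟩ := eventually_atTop.1 (hu.eventually (gt_mem_nhds hε))
  filter_upwards [eventually_ge_atTop (t N)] with r hr
  obtain ⟨n, hn⟩ := exists_mem_Ico_of_tendsto_atTop htop ((ht (Nat.zero_le N)).trans hr)
  have hNn : N ≤ n := not_lt.1 fun h => (hr.trans_lt hn.2).not_ge (ht (by omega))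
  exact (hgu n r hn).trans_lt (hN n hNn)

theorem stmt_3_general
    {H : Type*} [NormedAddCommGroup H] [InnerProductSpace ℝ H]
    (S : ℝ → H →L[ℝ] H) (M μ : ℝ)
    (hSbound : ∀ s : ℝ, 0 ≤ s → ‖S s‖ ≤ M * Real.exp (-μ * s))
    (hScontr : ∀ s : ℝ, 0 ≤ s → ∀ x : H, ‖S s x‖ ≤ ‖x‖)
    (t : ℕ → ℝ) (ht0 : t 0 = 0) (htmono : StrictMono t)
    (htlim : Filter.Tendsto t Filter.atTop Filter.atTop)
    (τ : ℝ) (hτ : 0 < τ)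
    (B : ℕ → H →L[ℝ] H)
    (hT2nτ : ∀ n : ℕ, τ ≤ t (2*n+1) - t (2*n))
    (hdiv : Filter.Tendsto
      (fun N => ∑ n ∈ Finset.range (N+1),
        Real.log (Real.exp (2*‖B n‖*(t (2*n+2) - t (2*n+1))) *
          (M^2 * Real.exp (-2*μ*(t (2*n+1) - t (2*n))) + (t (2*n+2) - t (2*n+1))*‖B n‖)))
      Filter.atTop Filter.atBot)
    (U : ℝ → H) (U₀ : H) (V : ℝ → H)
    (hUcont : ContinuousOn U (Set.Ici (0:ℝ))) (hU0 : U 0 = U₀)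
    (hUeven : ∀ n : ℕ, ∀ s ∈ Set.Icc (t (2*n)) (t (2*n+1)),
      U s = S (s - t (2*n)) (U (t (2*n))))
    (hUodd : ∀ n : ℕ, ∀ s ∈ Set.Ioo (t (2*n+1)) (t (2*n+2)),
      HasDerivAt U (V s + B n (U (s - τ))) s)
    (hdiss : ∀ n : ℕ, ∀ s ∈ Set.Ioo (t (2*n+1)) (t (2*n+2)),
      (inner ℝ (U s) (V s) : ℝ) ≤ 0)
    :
    Filter.Tendsto (fun r => ‖U r‖) Filter.atTop (nhds 0) := by
  set ρ : ℕ → ℝ := fun n =>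
    delayGrowth ‖B n‖ (M ^ 2 * exp (-2 * μ * (t (2 * n + 1) - t (2 * n))))
      (t (2 * n + 2) - t (2 * n + 1))
  have hρ (n : ℕ) : 0 ≤ ρ n :=
    delayGrowth_nonneg (norm_nonneg _) (by positivity) (sub_nonneg.2 (htmono (by omega)).le)
  have hperiod (n : ℕ) := norm_sq_le_on_period hSbound hScontr hτ (hT2nτ n)
    (htmono (by omega : 2 * n + 1 < 2 * n + 2)).le
    (hUcont.mono fun s hs => (ht0 ▸ htmono.monotone (Nat.zero_le (2 * n + 1))).trans hs.1)
    (hUeven n) (hUodd n) (hdiss n)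
  have hstart (n : ℕ) : ‖U (t (2 * n))‖ ^ 2 ≤ ‖U₀‖ ^ 2 * ∏ k ∈ Finset.range n, ρ k := by
    simpa [ht0, hU0] using le_mul_prod_range_of_le_mul (x := fun n => ‖U (t (2 * n))‖ ^ 2) hρ
      (fun n => by simpa only [mul_add, mul_one] using (hperiod n).2) n
  have hprod := tendsto_prod_range_zero_of_sum_log_tendsto_atBot hρ hdiv
  have hsq : Tendsto (fun r => ‖U r‖ ^ 2) atTop (𝓝 0) := by
    refine tendsto_nhds_zero_of_le_on_Ico (t := fun n => t (2 * n))
      (htmono.monotone.comp fun m n h => by omega)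
      (htlim.comp (tendsto_id.const_mul_atTop' two_pos))
      (u := fun n => ‖U₀‖ ^ 2 * (∏ k ∈ Finset.range n, ρ k) * (1 + ρ n)) ?_
      (fun r => sq_nonneg _) fun n r hr => ?_
    · simpa [mul_add, mul_assoc, Finset.prod_range_succ] using
        (hprod.add (hprod.comp (tendsto_add_atTop_nat 1))).const_mul (‖U₀‖ ^ 2)
    · exact ((hperiod n).1 r ⟨hr.1, hr.2.le⟩).trans
        (mul_le_mul_of_nonneg_right (hstart n) (by linarith [hρ n]))
  simpa using hsq.sqrt

theorem stmt_3
    {H : Type*} [NormedAddCommGroup H] [InnerProductSpace ℝ H]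
    (S : ℝ → H →L[ℝ] H) (M μ : ℝ)
    (hM : 1 ≤ M) (hμ : 0 < μ)
    (hS0 : S 0 = ContinuousLinearMap.id ℝ H)
    (hSadd : ∀ s u : ℝ, 0 ≤ s → 0 ≤ u → S (s + u) = (S s).comp (S u))
    (hScont : ∀ x : H, ContinuousOn (fun s => S s x) (Set.Ici (0:ℝ)))
    (hSbound : ∀ s : ℝ, 0 ≤ s → ‖S s‖ ≤ M * Real.exp (-μ * s))
    (hScontr : ∀ s : ℝ, 0 ≤ s → ∀ x : H, ‖S s x‖ ≤ ‖x‖)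
    (t : ℕ → ℝ) (ht0 : t 0 = 0) (htmono : StrictMono t)
    (htlim : Filter.Tendsto t Filter.atTop Filter.atTop)
    (τ : ℝ) (hτ : 0 < τ)
    (B : ℕ → H →L[ℝ] H)
    (hT2nτ : ∀ n : ℕ, τ ≤ t (2*n+1) - t (2*n))
    (hT2nstar : ∀ n : ℕ, Real.log M / μ < t (2*n+1) - t (2*n))
    (hdiv : Filter.Tendsto
      (fun N => ∑ n ∈ Finset.range (N+1),
        Real.log (Real.exp (2*‖B n‖*(t (2*n+2) - t (2*n+1))) *
          (M^2 * Real.exp (-2*μ*(t (2*n+1) - t (2*n))) + (t (2*n+2) - t (2*n+1))*‖B n‖)))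
      Filter.atTop Filter.atBot)
    (U : ℝ → H) (U₀ : H) (V : ℝ → H)
    (hUcont : ContinuousOn U (Set.Ici (0:ℝ))) (hU0 : U 0 = U₀)
    (hUeven : ∀ n : ℕ, ∀ s ∈ Set.Icc (t (2*n)) (t (2*n+1)),
      U s = S (s - t (2*n)) (U (t (2*n))))
    (hUodd : ∀ n : ℕ, ∀ s ∈ Set.Ioo (t (2*n+1)) (t (2*n+2)),
      HasDerivAt U (V s + B n (U (s - τ))) s)
    (hdiss : ∀ n : ℕ, ∀ s ∈ Set.Ioo (t (2*n+1)) (t (2*n+2)),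
      (inner ℝ (U s) (V s) : ℝ) ≤ 0)
    :
    Filter.Tendsto (fun r => ‖U r‖) Filter.atTop (nhds 0) :=
  stmt_3_general S M μ hSbound hScontr t ht0 htmono htlim τ hτ B hT2nτ hdiv U U₀ V hUcont hU0 hUeven
    hUodd hdiss
end

section
/- Let (β_n)_{n∈ℕ} and (θ_n)_{n∈ℕ} be sequences of nonnegative real numbers and (c_n)_{n∈ℕ} a sequence in (0,1). If ∑_{n=0}^∞ β_n θ_n < +∞ and the partial sums ∑_{n=0}^{N} ln c_n tend to −∞ as N → ∞, then the partial sums ∑_{n=0}^{N} ln[ e^{2 β_n θ_n} (c_n + β_n θ_n) ] tend to −∞ as N → ∞. -/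
open Filter Finset Real

/-!
Write `a n = β n * θ n`. The only difficulty is that `c n` may be much smaller than `a n`, so that
`log (c n + a n)` is not close to `log (c n)`. Cutting `c n` off from below at `1/2` costs at most
`2 a n`: `log (c + a) ≤ max (log c) (log (1/2)) + 2 a`. Each term is then bounded by
`max (log (c n)) (log (1/2)) + 4 a n`, and the truncated series `∑ max (log (c n)) (log (1/2))`
still diverges to `-∞`, since if it converged its terms would tend to `0` and hence eventually
coincide with `log (c n)`.
-/

lemma Real.log_add_le_log_add_div {m a : ℝ} (hm : 0 < m) (ha : 0 ≤ a) :
    log (m + a) ≤ log m + a / m := by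
  have h : m + a ≤ m * exp (a / m) := by
    have := add_one_le_exp (a / m)
    calc m + a = m * (a / m + 1) := by field_simp; ring
      _ ≤ m * exp (a / m) := by gcongr
  calc log (m + a) ≤ log (m * exp (a / m)) := log_le_log (by positivity) h
    _ = log m + a / m := by rw [log_mul hm.ne' (exp_pos _).ne', log_exp]

lemma Real.log_add_le_max_log_add_div {c δ a : ℝ} (hc : 0 < c) (hδ : 0 < δ) (ha : 0 ≤ a) :
    log (c + a) ≤ max (log c) (log δ) + a / δ := by
  have hm : 0 < max c δ := lt_max_of_lt_right hδ
  have hlog : log (max c δ) = max (log c) (log δ) := by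
    rcases le_total c δ with h | h
    · rw [max_eq_right h, max_eq_right (log_le_log hc h)]
    · rw [max_eq_left h, max_eq_left (log_le_log hδ h)]
  calc log (c + a) ≤ log (max c δ + a) :=
        log_le_log (by positivity) (by gcongr; exact le_max_left _ _)
    _ ≤ log (max c δ) + a / max c δ := log_add_le_log_add_div hm ha
    _ ≤ max (log c) (log δ) + a / δ := by rw [hlog]; gcongr; exact le_max_right _ _

lemma tendsto_sum_range_atBot_iff_not_summable {f : ℕ → ℝ} (hf : ∀ n, f n ≤ 0) :
    Tendsto (fun N ↦ ∑ n ∈ range N, f n) atTop atBot ↔ ¬ Summable f := by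
  rw [← summable_neg_iff,
    summable_iff_not_tendsto_nat_atTop_of_nonneg (fun n ↦ neg_nonneg.2 (hf n)), not_not,
    ← tendsto_neg_atTop_iff]
  simp only [sum_neg_distrib]

lemma tendsto_sum_range_max_atBot {x : ℕ → ℝ} {L : ℝ} (hx : ∀ n, x n ≤ 0) (hL : L < 0)
    (h : Tendsto (fun N ↦ ∑ n ∈ range N, x n) atTop atBot) :
    Tendsto (fun N ↦ ∑ n ∈ range N, max (x n) L) atTop atBot := by
  rw [tendsto_sum_range_atBot_iff_not_summable hx] at h
  rw [tendsto_sum_range_atBot_iff_not_summable fun n ↦ max_le (hx n) hL.le]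
  intro hs
  have hlarge : ∀ᶠ n in atTop, L < max (x n) L :=
    hs.tendsto_atTop_zero.eventually (lt_mem_nhds hL)
  exact h (hs.congr_atTop (hlarge.mono fun n hn ↦
    max_eq_left ((lt_max_iff.mp hn).resolve_right (lt_irrefl L)).le))

lemma tendsto_sum_range_atBot_of_le_add {f g a : ℕ → ℝ} (hfg : ∀ n, f n ≤ g n + a n)
    (ha : ∀ n, 0 ≤ a n) (hsum : Summable a)
    (hg : Tendsto (fun N ↦ ∑ n ∈ range N, g n) atTop atBot) :
    Tendsto (fun N ↦ ∑ n ∈ range N, f n) atTop atBot := by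
  refine tendsto_atBot_mono (fun N ↦ ?_) (tendsto_atBot_add_const_right _ (∑' n, a n) hg)
  calc ∑ n ∈ range N, f n ≤ ∑ n ∈ range N, (g n + a n) := sum_le_sum fun n _ ↦ hfg n
    _ = ∑ n ∈ range N, g n + ∑ n ∈ range N, a n := sum_add_distrib
    _ ≤ ∑ n ∈ range N, g n + ∑' n, a n := by gcongr; exact hsum.sum_le_tsum _ fun n _ ↦ ha n

theorem stmt_4
    (β θ : ℕ → ℝ) (hβ : ∀ n, 0 ≤ β n) (hθ : ∀ n, 0 ≤ θ n)
    (c : ℕ → ℝ) (hc : ∀ n, c n ∈ Set.Ioo (0:ℝ) 1)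
    (hsum : Summable (fun n => β n * θ n))
    (hdiv : Filter.Tendsto (fun N => ∑ n ∈ Finset.range (N+1), Real.log (c n))
      Filter.atTop Filter.atBot)
    :
    Filter.Tendsto
      (fun N => ∑ n ∈ Finset.range (N+1),
        Real.log (Real.exp (2*β n*θ n) * (c n + β n*θ n)))
      Filter.atTop Filter.atBot := by
  have hβθ (n : ℕ) : 0 ≤ β n * θ n := mul_nonneg (hβ n) (hθ n)
  have hterm (n : ℕ) : log (exp (2 * β n * θ n) * (c n + β n * θ n))
      ≤ max (log (c n)) (log (1 / 2)) + 4 * (β n * θ n) := by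
    have hpos : 0 < c n + β n * θ n := add_pos_of_pos_of_nonneg (hc n).1 (hβθ n)
    rw [log_mul (exp_pos _).ne' hpos.ne', log_exp]
    have := log_add_le_max_log_add_div (hc n).1 one_half_pos (hβθ n)
    linarith
  have hmax := tendsto_sum_range_max_atBot (fun n ↦ (log_neg (hc n).1 (hc n).2).le)
    (log_neg one_half_pos one_half_lt_one) ((tendsto_add_atTop_iff_nat 1).1 hdiv)
  exact (tendsto_add_atTop_iff_nat 1).2 (tendsto_sum_range_atBot_of_le_add hterm
    (fun n ↦ mul_nonneg zero_le_four (hβθ n)) (hsum.mul_left 4) hmax)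
end

section
/- Assume T_{2n} = T⁰ for all n, with T⁰ ≥ τ and T⁰ > T*, and T_{2n+1} = T̃ for all n. Set c := M e^{−μ T⁰}, and suppose there is d < 1 such that e^{2 B_{2n+1} T̃} (c + B_{2n+1} T̃) ≤ d for every n ∈ ℕ. Then there exist constants C > 0 and α > 0, depending only on M, μ, τ, T⁰, T̃ and d, such that every trajectory U of the on–off delay system with initial datum U₀ satisfies ‖U(t)‖ ≤ C e^{−α t} ‖U₀‖ for all t ≥ 0. -/
/-!
Over one period `[t₂ₙ, t₂ₙ₊₂]` the off-phase keeps `‖U‖ ≤ ‖U(t₂ₙ)‖` and ends with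
`‖U(t₂ₙ₊₁)‖ ≤ c ‖U(t₂ₙ)‖`, `c = M e^{-μT⁰}`. Since `τ ≤ T⁰`, the delayed term of the on-phase
only looks back into the same period, so if `P` is the maximum of `‖U‖` over the period,
dissipativity gives `‖U s‖ ≤ c ‖U(t₂ₙ)‖ + ‖Bₙ‖ T̃ P` on the on-phase. As `c + ‖Bₙ‖ T̃ ≤ d < 1`,
this forces `P = ‖U(t₂ₙ)‖` and `‖U(t₂ₙ₊₂)‖ ≤ d ‖U(t₂ₙ)‖`. Iterating over the periods, all of
length `T⁰ + T̃`, gives decay at rate `-log d / (T⁰ + T̃)`.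
-/

open Set Real

theorem le_inv_mul_exp_of_le_pow {g : ℝ → ℝ} {T d A : ℝ} (hT : 0 < T) (hd0 : 0 < d)
    (hd1 : d ≤ 1) (hA : 0 ≤ A) (h : ∀ n : ℕ, ∀ r ∈ Icc (n * T) ((n + 1) * T), g r ≤ d ^ n * A)
    {r : ℝ} (hr : 0 ≤ r) : g r ≤ d⁻¹ * exp (-(-log d / T) * r) * A := by
  set n := ⌊r / T⌋₊
  have hn : r / T - 1 ≤ n := by linarith [Nat.lt_floor_add_one (r / T)]
  have hpow : d ^ n ≤ d⁻¹ * exp (-(-log d / T) * r) := calc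
    d ^ n = exp (n * log d) := by rw [exp_nat_mul, exp_log hd0]
    _ ≤ exp ((r / T - 1) * log d) :=
      exp_le_exp.2 (mul_le_mul_of_nonpos_right hn (log_nonpos hd0.le hd1))
    _ = d⁻¹ * exp (-(-log d / T) * r) := by
      rw [← exp_log (inv_pos.2 hd0), ← exp_add, log_inv]; ring_nf
  refine (h n r ⟨?_, ?_⟩).trans (by gcongr)
  · exact (le_div_iff₀ hT).1 (Nat.floor_le (div_nonneg hr hT.le))
  · exact ((div_lt_iff₀ hT).1 (Nat.lt_floor_add_one (r / T))).le

theorem eq_mul_add_of_alternating_gaps {t : ℕ → ℝ} {T0 Ttil : ℝ} (ht0 : t 0 = 0)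
    (hT0 : ∀ n : ℕ, t (2*n+1) - t (2*n) = T0) (hTt : ∀ n : ℕ, t (2*n+2) - t (2*n+1) = Ttil)
    (n : ℕ) : t (2 * n) = n * (T0 + Ttil) := by
  induction n with
  | zero => simpa using ht0
  | succ k ih =>
    rw [show 2 * (k + 1) = 2 * k + 2 by ring]
    push_cast
    linarith [hT0 k, hTt k]

section InnerProductSpace

variable {E : Type*} [NormedAddCommGroup E] [InnerProductSpace ℝ E]

theorem norm_le_add_mul_of_inner_deriv_le {U W : ℝ → E} {a b K : ℝ} (hK : 0 ≤ K)
    (hU : ContinuousOn U (Icc a b)) (hderiv : ∀ s ∈ Ioo a b, HasDerivAt U (W s) s)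
    (hinner : ∀ s ∈ Ioo a b, inner ℝ (U s) (W s) ≤ K * ‖U s‖) :
    ∀ s ∈ Icc a b, ‖U s‖ ≤ ‖U a‖ + K * (s - a) := by
  intro s hs
  refine le_of_forall_pos_le_add fun ε hε => ?_
  -- `√(‖U‖² + ε²)` is a differentiable substitute for `‖U‖` with the same slope bound.
  set φ : ℝ → ℝ := fun x => √(‖U x‖ ^ 2 + ε ^ 2)
  have hφ : ∀ x ∈ Ioo a b,
      HasDerivAt φ (2 * inner ℝ (U x) (W x) / (2 * φ x)) x := fun x hx =>
    ((hderiv x hx).norm_sq.add_const _).sqrt (by positivity)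
  have hslope : ∀ x ∈ interior (Icc a b), deriv φ x ≤ K := by
    rw [interior_Icc]
    intro x hx
    have hnorm : ‖U x‖ ≤ φ x := Real.le_sqrt_of_sq_le (by nlinarith)
    rw [(hφ x hx).deriv, mul_div_mul_left _ _ two_ne_zero, div_le_iff₀ (by positivity)]
    exact (hinner x hx).trans (mul_le_mul_of_nonneg_left hnorm hK)
  have hφcont : ContinuousOn φ (Icc a b) := ((hU.norm.pow 2).add continuousOn_const).sqrt
  have hdiff : DifferentiableOn ℝ φ (interior (Icc a b)) := by
    rw [interior_Icc]
    exact fun x hx => (hφ x hx).differentiableAt.differentiableWithinAt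
  have := (convex_Icc a b).image_sub_le_mul_sub_of_deriv_le hφcont hdiff hslope a
    (left_mem_Icc.2 (hs.1.trans hs.2)) s hs hs.1
  have hs_le : ‖U s‖ ≤ φ s := Real.le_sqrt_of_sq_le (by nlinarith)
  have ha_le : φ a ≤ ‖U a‖ + ε :=
    Real.sqrt_le_iff.2 ⟨by positivity, by nlinarith [norm_nonneg (U a)]⟩
  linarith

theorem norm_le_of_onOff_period {U V : ℝ → E} {B : E →L[ℝ] E} {p q w τ c : ℝ}
    (hqw : q ≤ w) (hτ : 0 < τ) (hτq : τ ≤ q - p) (hc : 0 ≤ c) (hκ : c + ‖B‖ * (w - q) < 1)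
    (hU : ContinuousOn U (Icc p w))
    (hoff : ∀ s ∈ Icc p q, ‖U s‖ ≤ ‖U p‖) (hq : ‖U q‖ ≤ c * ‖U p‖)
    (hderiv : ∀ s ∈ Ioo q w, HasDerivAt U (V s + B (U (s - τ))) s)
    (hdiss : ∀ s ∈ Ioo q w, inner ℝ (U s) (V s) ≤ 0) :
    (∀ s ∈ Icc p w, ‖U s‖ ≤ ‖U p‖) ∧ ‖U w‖ ≤ (c + ‖B‖ * (w - q)) * ‖U p‖ := by
  have hpq : p ≤ q := by linarith
  obtain ⟨m, hm, hmaxOn⟩ :=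
    isCompact_Icc.exists_isMaxOn (nonempty_Icc.2 (hpq.trans hqw)) hU.norm
  set P := ‖U m‖
  have hmax : ∀ s ∈ Icc p w, ‖U s‖ ≤ P := fun s hs => hmaxOn hs
  have hon : ∀ s ∈ Icc q w, ‖U s‖ ≤ c * ‖U p‖ + ‖B‖ * P * (w - q) := by
    intro s hs
    have hinner : ∀ x ∈ Ioo q w,
        inner ℝ (U x) (V x + B (U (x - τ))) ≤ ‖B‖ * P * ‖U x‖ := by
      intro x hx
      have hdelay : ‖U (x - τ)‖ ≤ P := hmax _ ⟨by linarith [hx.1], by linarith [hx.2]⟩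
      calc inner ℝ (U x) (V x + B (U (x - τ)))
          ≤ inner ℝ (U x) (B (U (x - τ))) := by
            rw [inner_add_right]; linarith [hdiss x hx]
        _ ≤ ‖U x‖ * (‖B‖ * ‖U (x - τ)‖) :=
            (real_inner_le_norm _ _).trans (by gcongr; exact B.le_opNorm _)
        _ ≤ ‖U x‖ * (‖B‖ * P) := by gcongr
        _ = ‖B‖ * P * ‖U x‖ := by ring
    have := norm_le_add_mul_of_inner_deriv_le (by positivity)
      (hU.mono (Icc_subset_Icc hpq le_rfl)) hderiv hinner s hs
    have : ‖B‖ * P * (s - q) ≤ ‖B‖ * P * (w - q) := by gcongr; exact hs.2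
    linarith
  have hP : P ≤ ‖U p‖ := by
    rcases le_total m q with hmq | hqm
    · exact hoff m ⟨hm.1, hmq⟩
    · have := hon m ⟨hqm, hm.2⟩
      nlinarith [norm_nonneg (U p), norm_nonneg B, mul_nonneg (norm_nonneg B) (sub_nonneg.2 hqw)]
  refine ⟨fun s hs => (hmax s hs).trans hP, ?_⟩
  have := hon w ⟨hqw, le_rfl⟩
  have : ‖B‖ * P * (w - q) ≤ ‖B‖ * ‖U p‖ * (w - q) := by gcongr
  linarith

end InnerProductSpace

theorem stmt_7_general
    {H : Type*} [NormedAddCommGroup H] [InnerProductSpace ℝ H]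
    (S : ℝ → H →L[ℝ] H) (M μ : ℝ)
    (hM : 1 ≤ M)
    (hSbound : ∀ s : ℝ, 0 ≤ s → ‖S s‖ ≤ M * Real.exp (-μ * s))
    (hScontr : ∀ s : ℝ, 0 ≤ s → ∀ x : H, ‖S s x‖ ≤ ‖x‖)
    (t : ℕ → ℝ) (ht0 : t 0 = 0) (htmono : StrictMono t)
    (τ : ℝ) (hτ : 0 < τ)
    (B : ℕ → H →L[ℝ] H)
    (T0 Ttil : ℝ)
    (hT0 : ∀ n : ℕ, t (2*n+1) - t (2*n) = T0)
    (hT0τ : τ ≤ T0)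
    (hTt : ∀ n : ℕ, t (2*n+2) - t (2*n+1) = Ttil)
    (d : ℝ) (hd : d < 1)
    (hsup : ∀ n : ℕ,
      Real.exp (2*‖B n‖*Ttil) * (M * Real.exp (-μ*T0) + ‖B n‖*Ttil) ≤ d)
    :
    ∃ C > (0:ℝ), ∃ α > (0:ℝ), ∀ (U : ℝ → H) (U₀ : H) (V : ℝ → H),
      ContinuousOn U (Set.Ici (0:ℝ)) → U 0 = U₀ →
      (∀ n : ℕ, ∀ s ∈ Set.Icc (t (2*n)) (t (2*n+1)),
        U s = S (s - t (2*n)) (U (t (2*n)))) →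
      (∀ n : ℕ, ∀ s ∈ Set.Ioo (t (2*n+1)) (t (2*n+2)),
        HasDerivAt U (V s + B n (U (s - τ))) s) →
      (∀ n : ℕ, ∀ s ∈ Set.Ioo (t (2*n+1)) (t (2*n+2)),
        (inner ℝ (U s) (V s) : ℝ) ≤ 0) →
      ∀ r : ℝ, 0 ≤ r → ‖U r‖ ≤ C * Real.exp (-α * r) * ‖U₀‖ := by
  have hT0pos : 0 < T0 := by rw [← hT0 0]; exact sub_pos.2 (htmono (by omega))
  have hTtpos : 0 < Ttil := by rw [← hTt 0]; exact sub_pos.2 (htmono (by omega))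
  have hκ (n : ℕ) : M * exp (-μ * T0) + ‖B n‖ * Ttil ≤ d :=
    (le_mul_of_one_le_left (by positivity) (one_le_exp (by positivity))).trans (hsup n)
  have hM0 : 0 < M := by linarith
  have hd0 : 0 < d := lt_of_lt_of_le (by positivity) (hκ 0)
  refine ⟨d⁻¹, inv_pos.2 hd0, -log d / (T0 + Ttil), div_pos (neg_pos.2 (log_neg hd0 hd))
    (by linarith), fun U U₀ V hU hU0 hoff hderiv hdiss r hr => ?_⟩
  have hperiod (n : ℕ) : (∀ s ∈ Icc (t (2*n)) (t (2*n+2)), ‖U s‖ ≤ ‖U (t (2*n))‖) ∧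
      ‖U (t (2*n+2))‖ ≤ d * ‖U (t (2*n))‖ := by
    have ht2n : 0 ≤ t (2*n) := ht0 ▸ htmono.monotone (Nat.zero_le _)
    have hSq := (S T0).le_of_opNorm_le (hSbound T0 hT0pos.le) (U (t (2*n)))
    have := norm_le_of_onOff_period (c := M * exp (-μ * T0)) (by linarith [hTt n]) hτ
      (by linarith [hT0 n]) (by positivity) (by rw [hTt n]; linarith [hκ n])
      (hU.mono fun s hs => ht2n.trans hs.1)
      (fun s hs => by rw [hoff n s hs]; exact hScontr _ (by linarith [hs.1]) _)
      (by rwa [hoff n _ ⟨by linarith [hT0 n], le_rfl⟩, hT0 n]) (hderiv n) (hdiss n)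
    rw [hTt n] at this
    exact ⟨this.1, this.2.trans (by gcongr; exact hκ n)⟩
  have hiter (n : ℕ) : ‖U (t (2*n))‖ ≤ d ^ n * ‖U₀‖ := by
    simpa [ht0, hU0] using
      le_geom (u := fun k => ‖U (t (2*k))‖) hd0.le n fun k _ => (hperiod k).2
  refine le_inv_mul_exp_of_le_pow (g := fun s => ‖U s‖) (by linarith) hd0 hd.le (norm_nonneg _)
    (fun n s hs => ((hperiod n).1 s ?_).trans (hiter n)) hr
  have h2n2 : t (2*n+2) = (n + 1) * (T0 + Ttil) := by
    rw [show 2*n+2 = 2*(n+1) by ring, eq_mul_add_of_alternating_gaps ht0 hT0 hTt]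
    push_cast; ring
  rwa [eq_mul_add_of_alternating_gaps ht0 hT0 hTt, h2n2]

theorem stmt_7
    {H : Type*} [NormedAddCommGroup H] [InnerProductSpace ℝ H]
    (S : ℝ → H →L[ℝ] H) (M μ : ℝ)
    (hM : 1 ≤ M) (hμ : 0 < μ)
    (hS0 : S 0 = ContinuousLinearMap.id ℝ H)
    (hSadd : ∀ s u : ℝ, 0 ≤ s → 0 ≤ u → S (s + u) = (S s).comp (S u))
    (hScont : ∀ x : H, ContinuousOn (fun s => S s x) (Set.Ici (0:ℝ)))
    (hSbound : ∀ s : ℝ, 0 ≤ s → ‖S s‖ ≤ M * Real.exp (-μ * s))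
    (hScontr : ∀ s : ℝ, 0 ≤ s → ∀ x : H, ‖S s x‖ ≤ ‖x‖)
    (t : ℕ → ℝ) (ht0 : t 0 = 0) (htmono : StrictMono t)
    (htlim : Filter.Tendsto t Filter.atTop Filter.atTop)
    (τ : ℝ) (hτ : 0 < τ)
    (B : ℕ → H →L[ℝ] H)
    (T0 Ttil : ℝ)
    (hT0 : ∀ n : ℕ, t (2*n+1) - t (2*n) = T0)
    (hT0τ : τ ≤ T0) (hT0star : Real.log M / μ < T0)
    (hTt : ∀ n : ℕ, t (2*n+2) - t (2*n+1) = Ttil)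
    (d : ℝ) (hd : d < 1)
    (hsup : ∀ n : ℕ,
      Real.exp (2*‖B n‖*Ttil) * (M * Real.exp (-μ*T0) + ‖B n‖*Ttil) ≤ d)
    :
    ∃ C > (0:ℝ), ∃ α > (0:ℝ), ∀ (U : ℝ → H) (U₀ : H) (V : ℝ → H),
      ContinuousOn U (Set.Ici (0:ℝ)) → U 0 = U₀ →
      (∀ n : ℕ, ∀ s ∈ Set.Icc (t (2*n)) (t (2*n+1)),
        U s = S (s - t (2*n)) (U (t (2*n)))) →
      (∀ n : ℕ, ∀ s ∈ Set.Ioo (t (2*n+1)) (t (2*n+2)),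
        HasDerivAt U (V s + B n (U (s - τ))) s) →
      (∀ n : ℕ, ∀ s ∈ Set.Ioo (t (2*n+1)) (t (2*n+2)),
        (inner ℝ (U s) (V s) : ℝ) ≤ 0) →
      ∀ r : ℝ, 0 ≤ r → ‖U r‖ ≤ C * Real.exp (-α * r) * ‖U₀‖ :=
  stmt_7_general S M μ hM hSbound hScontr t ht0 htmono τ hτ B T0 Ttil hT0 hT0τ hTt d hd hsup
end

section
/- Assume T_{2n} = T⁰ for all n with T⁰ > T*, and T_{2n+1} = T̃ for all n. Set c := M e^{−μ T⁰}, and suppose there is d < 1 such that e^{2 D_{2n+1} T̃} c ≤ d for every n ∈ ℕ. Then there exist constants C > 0 and α > 0, depending only on M, μ, T⁰, T̃ and d, such that every trajectory U of the on–off anti-damped system with initial datum U₀ satisfies ‖U(t)‖ ≤ C e^{−α t} ‖U₀‖ for all t ≥ 0. -/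
/-!
On an off-interval the trajectory follows the contraction semigroup, so its norm does not
increase, and after the full length `T⁰` it has shrunk by `‖S T⁰‖ ≤ c = M e^{-μT⁰}`. On an
on-interval the dissipativity `⟪U, V⟫ ≤ 0` gives `(‖U‖²)' ≤ 2‖𝓓‖ ‖U‖²`, so `‖U‖` grows at most
by `e^{‖𝓓‖ T̃}`. Hence over each period of length `T⁰ + T̃` the norm never exceeds its initial
value and ends below `q = max d ½ < 1` times it; geometric decay on the grid `n (T⁰ + T̃)` is
exponential decay with `C = q⁻¹` and `α = -log q / (T⁰ + T̃)`.
-/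

open Set Real
open scoped InnerProductSpace

theorem le_exp_mul_mul_of_hasDerivAt_le_mul {φ φ' : ℝ → ℝ} {k a b : ℝ}
    (hφ : ContinuousOn φ (Icc a b)) (hderiv : ∀ s ∈ Ioo a b, HasDerivAt φ (φ' s) s)
    (hbound : ∀ s ∈ Ioo a b, φ' s ≤ k * φ s) :
    ∀ s ∈ Icc a b, φ s ≤ exp (k * (s - a)) * φ a := by
  set g : ℝ → ℝ := fun s => exp (-k * s) * φ s
  have hg : ∀ s ∈ Ioo a b, HasDerivAt g (exp (-k * s) * (φ' s - k * φ s)) s := by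
    intro s hs
    have hexp : HasDerivAt (fun s => exp (-k * s)) (exp (-k * s) * -k) s := by
      simpa using ((hasDerivAt_id s).const_mul (-k)).exp
    exact (hexp.mul (hderiv s hs)).congr_deriv (by ring)
  have hanti : AntitoneOn g (Icc a b) := by
    refine antitoneOn_of_deriv_nonpos (convex_Icc a b) ?_ ?_ ?_
    · exact (continuous_exp.comp (continuous_const.mul continuous_id)).continuousOn.mul hφ
    · rw [interior_Icc]
      exact fun s hs => (hg s hs).differentiableAt.differentiableWithinAt
    · rw [interior_Icc]
      intro s hs
      rw [(hg s hs).deriv]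
      exact mul_nonpos_of_nonneg_of_nonpos (exp_pos _).le (by linarith [hbound s hs])
  intro s hs
  have hgs : g s ≤ g a := hanti (left_mem_Icc.2 (hs.1.trans hs.2)) hs hs.1
  calc φ s = exp (k * s) * g s := by simp only [g, ← mul_assoc, ← exp_add]; simp
    _ ≤ exp (k * s) * g a := by gcongr
    _ = exp (k * (s - a)) * φ a := by simp only [g, ← mul_assoc, ← exp_add]; ring_nf

theorem real_inner_add_apply_le {H : Type*} [NormedAddCommGroup H] [InnerProductSpace ℝ H]
    (A : H →L[ℝ] H) {u v : H} (huv : ⟪u, v⟫_ℝ ≤ 0) : ⟪u, v + A u⟫_ℝ ≤ ‖A‖ * ‖u‖ ^ 2 := by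
  calc ⟪u, v + A u⟫_ℝ ≤ ⟪u, A u⟫_ℝ := by rw [inner_add_right]; linarith
    _ ≤ ‖u‖ * ‖A u‖ := real_inner_le_norm _ _
    _ ≤ ‖u‖ * (‖A‖ * ‖u‖) := by gcongr; exact A.le_opNorm u
    _ = ‖A‖ * ‖u‖ ^ 2 := by ring

theorem norm_le_exp_opNorm_mul_of_hasDerivAt {H : Type*} [NormedAddCommGroup H]
    [InnerProductSpace ℝ H] {U V : ℝ → H} {A : H →L[ℝ] H} {a b : ℝ}
    (hU : ContinuousOn U (Icc a b)) (hderiv : ∀ s ∈ Ioo a b, HasDerivAt U (V s + A (U s)) s)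
    (hdiss : ∀ s ∈ Ioo a b, ⟪U s, V s⟫_ℝ ≤ 0) :
    ∀ s ∈ Icc a b, ‖U s‖ ≤ exp (‖A‖ * (s - a)) * ‖U a‖ := by
  intro s hs
  have hsq := le_exp_mul_mul_of_hasDerivAt_le_mul (φ := fun s => ‖U s‖ ^ 2) (k := 2 * ‖A‖)
    (hU.norm.pow 2) (fun s hs => (hderiv s hs).norm_sq)
    (fun s hs => by linarith [real_inner_add_apply_le A (hdiss s hs)]) s hs
  rw [← pow_le_pow_iff_left₀ (norm_nonneg _) (by positivity) two_ne_zero, mul_pow,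
    ← exp_nat_mul]
  rwa [Nat.cast_ofNat, ← mul_assoc]

theorem pow_floor_div_le_inv_mul_exp {q P : ℝ} (hq0 : 0 < q) (hq1 : q ≤ 1) (r : ℝ) :
    q ^ ⌊r / P⌋₊ ≤ q⁻¹ * exp (log q / P * r) := by
  have hfloor : r / P - 1 ≤ ⌊r / P⌋₊ := by linarith [Nat.lt_floor_add_one (r / P)]
  calc q ^ ⌊r / P⌋₊ = exp (⌊r / P⌋₊ * log q) := by rw [exp_nat_mul, exp_log hq0]
    _ ≤ exp ((r / P - 1) * log q) :=
      exp_le_exp.2 (mul_le_mul_of_nonpos_right hfloor (log_nonpos hq0.le hq1))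
    _ = q⁻¹ * exp (log q / P * r) := by
      rw [← exp_log (inv_pos.2 hq0), ← exp_add, log_inv]
      congr 1
      ring

theorem le_inv_mul_exp_mul_of_period_contraction {f : ℝ → ℝ} {τ : ℕ → ℝ} {P q : ℝ}
    (hτ : ∀ n : ℕ, τ n = n * P) (hP : 0 < P) (hq0 : 0 < q) (hq1 : q ≤ 1)
    (hf0 : 0 ≤ f (τ 0))
    (hperiod : ∀ n, (∀ s ∈ Icc (τ n) (τ (n + 1)), f s ≤ f (τ n)) ∧
      f (τ (n + 1)) ≤ q * f (τ n))
    {r : ℝ} (hr : 0 ≤ r) : f r ≤ q⁻¹ * exp (log q / P * r) * f (τ 0) := by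
  have hgrid : ∀ n, f (τ n) ≤ q ^ n * f (τ 0) := by
    intro n
    induction n with
    | zero => simp
    | succ n ih =>
      calc f (τ (n + 1)) ≤ q * f (τ n) := (hperiod n).2
        _ ≤ q * (q ^ n * f (τ 0)) := by gcongr
        _ = q ^ (n + 1) * f (τ 0) := by ring
  set n := ⌊r / P⌋₊
  have hr_mem : r ∈ Icc (τ n) (τ (n + 1)) := by
    rw [hτ, hτ, Nat.cast_succ]
    exact ⟨(le_div_iff₀ hP).1 (Nat.floor_le (div_nonneg hr hP.le)),
      ((div_lt_iff₀ hP).1 (Nat.lt_floor_add_one _)).le⟩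
  calc f r ≤ f (τ n) := (hperiod n).1 r hr_mem
    _ ≤ q ^ n * f (τ 0) := hgrid n
    _ ≤ q⁻¹ * exp (log q / P * r) * f (τ 0) := by
      gcongr
      exact pow_floor_div_le_inv_mul_exp hq0 hq1 r

theorem norm_le_of_onOffPeriod {H : Type*} [NormedAddCommGroup H] [InnerProductSpace ℝ H]
    {S : ℝ → H →L[ℝ] H} {A : H →L[ℝ] H} {U V : ℝ → H} {a b c q : ℝ}
    (hcontr : ∀ s : ℝ, 0 ≤ s → ∀ x : H, ‖S s x‖ ≤ ‖x‖)
    (hoff : ∀ s ∈ Icc a b, U s = S (s - a) (U a))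
    (hU : ContinuousOn U (Icc b c))
    (hderiv : ∀ s ∈ Ioo b c, HasDerivAt U (V s + A (U s)) s)
    (hdiss : ∀ s ∈ Ioo b c, ⟪U s, V s⟫_ℝ ≤ 0)
    (hab : a ≤ b) (hbc : b ≤ c)
    (hρ : exp (‖A‖ * (c - b)) * ‖S (b - a)‖ ≤ q) (hq1 : q ≤ 1) :
    (∀ s ∈ Icc a c, ‖U s‖ ≤ ‖U a‖) ∧ ‖U c‖ ≤ q * ‖U a‖ := by
  have hon : ∀ s ∈ Icc b c, ‖U s‖ ≤ q * ‖U a‖ := fun s hs => calc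
    ‖U s‖ ≤ exp (‖A‖ * (s - b)) * ‖U b‖ :=
      norm_le_exp_opNorm_mul_of_hasDerivAt hU hderiv hdiss s hs
    _ ≤ exp (‖A‖ * (c - b)) * (‖S (b - a)‖ * ‖U a‖) := by
      rw [hoff b ⟨hab, le_rfl⟩]
      gcongr
      · exact hs.2
      · exact (S (b - a)).le_opNorm _
    _ ≤ q * ‖U a‖ := by rw [← mul_assoc]; gcongr
  refine ⟨fun s hs => ?_, hon c ⟨hbc, le_rfl⟩⟩
  rcases le_total s b with hsb | hbs
  · rw [hoff s ⟨hs.1, hsb⟩]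
    exact hcontr _ (sub_nonneg.2 hs.1) _
  · exact (hon s ⟨hbs, hs.2⟩).trans (mul_le_of_le_one_left (norm_nonneg _) hq1)

theorem eq_mul_add_of_alternating_gaps_s11 {t : ℕ → ℝ} {T₀ T₁ : ℝ} (ht0 : t 0 = 0)
    (hT₀ : ∀ n : ℕ, t (2 * n + 1) - t (2 * n) = T₀)
    (hT₁ : ∀ n : ℕ, t (2 * n + 2) - t (2 * n + 1) = T₁)
    (n : ℕ) : t (2 * n) = n * (T₀ + T₁) := by
  induction n with
  | zero => simpa using ht0
  | succ n ih =>
    rw [show 2 * (n + 1) = 2 * n + 2 by ring, Nat.cast_succ]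
    linarith [hT₀ n, hT₁ n]

theorem stmt_11_general
    {H : Type*} [NormedAddCommGroup H] [InnerProductSpace ℝ H]
    (S : ℝ → H →L[ℝ] H) (M μ : ℝ)
    (hSbound : ∀ s : ℝ, 0 ≤ s → ‖S s‖ ≤ M * Real.exp (-μ * s))
    (hScontr : ∀ s : ℝ, 0 ≤ s → ∀ x : H, ‖S s x‖ ≤ ‖x‖)
    (t : ℕ → ℝ) (ht0 : t 0 = 0) (htmono : StrictMono t)
    (D : ℕ → H →L[ℝ] H)
    (T0 Ttil : ℝ)
    (hT0 : ∀ n : ℕ, t (2*n+1) - t (2*n) = T0)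
    (hTt : ∀ n : ℕ, t (2*n+2) - t (2*n+1) = Ttil)
    (d : ℝ) (hd : d < 1)
    (hsup : ∀ n : ℕ, Real.exp (2*‖D n‖*Ttil) * (M * Real.exp (-μ*T0)) ≤ d)
    :
    ∃ C > (0:ℝ), ∃ α > (0:ℝ), ∀ (U : ℝ → H) (U₀ : H) (V : ℝ → H),
      ContinuousOn U (Set.Ici (0:ℝ)) → U 0 = U₀ →
      (∀ n : ℕ, ∀ s ∈ Set.Icc (t (2*n)) (t (2*n+1)),
        U s = S (s - t (2*n)) (U (t (2*n)))) →
      (∀ n : ℕ, ∀ s ∈ Set.Ioo (t (2*n+1)) (t (2*n+2)),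
        HasDerivAt U (V s + D n (U s)) s) →
      (∀ n : ℕ, ∀ s ∈ Set.Ioo (t (2*n+1)) (t (2*n+2)),
        (inner ℝ (U s) (V s) : ℝ) ≤ 0) →
      ∀ r : ℝ, 0 ≤ r → ‖U r‖ ≤ C * Real.exp (-α * r) * ‖U₀‖ := by
  have hT0_pos : 0 < T0 := by linarith [hT0 0, htmono (show 2 * 0 < 2 * 0 + 1 by omega)]
  have hTt_nonneg : 0 ≤ Ttil := by linarith [hTt 0, htmono (show 2 * 0 + 1 < 2 * 0 + 2 by omega)]
  have hP : 0 < T0 + Ttil := by linarith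
  -- `d` may be nonpositive, where `log d` is junk; any positive `q ∈ [d, 1)` does the job.
  set q := max d 2⁻¹
  have hq0 : 0 < q := lt_max_of_lt_right (by norm_num)
  have hq1 : q < 1 := max_lt hd (by norm_num)
  refine ⟨q⁻¹, inv_pos.2 hq0, -log q / (T0 + Ttil),
    div_pos (neg_pos.2 (log_neg hq0 hq1)) hP, ?_⟩
  intro U U₀ V hUc hU0 heven hodd hdis r hr
  have hρ : ∀ n, exp (‖D n‖ * Ttil) * ‖S T0‖ ≤ q := fun n => calc
    exp (‖D n‖ * Ttil) * ‖S T0‖ ≤ exp (2 * ‖D n‖ * Ttil) * (M * exp (-μ * T0)) := by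
      gcongr
      · nlinarith [norm_nonneg (D n)]
      · exact hSbound T0 hT0_pos.le
    _ ≤ q := (hsup n).trans (le_max_left _ _)
  have hperiod : ∀ n,
      (∀ s ∈ Icc (t (2 * n)) (t (2 * n + 2)), ‖U s‖ ≤ ‖U (t (2 * n))‖) ∧
      ‖U (t (2 * n + 2))‖ ≤ q * ‖U (t (2 * n))‖ := fun n =>
    norm_le_of_onOffPeriod hScontr (heven n)
      (hUc.mono fun s hs => le_trans (ht0 ▸ htmono.monotone (Nat.zero_le _)) hs.1)
      (hodd n) (hdis n) (htmono.monotone (by omega)) (htmono.monotone (by omega))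
      (by rw [hT0 n, hTt n]; exact hρ n) hq1.le
  have hdecay := le_inv_mul_exp_mul_of_period_contraction (f := (‖U ·‖))
    (τ := fun n => t (2 * n)) (eq_mul_add_of_alternating_gaps_s11 ht0 hT0 hTt) hP hq0 hq1.le
    (norm_nonneg _) hperiod hr
  simpa [ht0, hU0, neg_div] using hdecay

theorem stmt_11
    {H : Type*} [NormedAddCommGroup H] [InnerProductSpace ℝ H]
    (S : ℝ → H →L[ℝ] H) (M μ : ℝ)
    (hM : 1 ≤ M) (hμ : 0 < μ)
    (hS0 : S 0 = ContinuousLinearMap.id ℝ H)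
    (hSadd : ∀ s u : ℝ, 0 ≤ s → 0 ≤ u → S (s + u) = (S s).comp (S u))
    (hScont : ∀ x : H, ContinuousOn (fun s => S s x) (Set.Ici (0:ℝ)))
    (hSbound : ∀ s : ℝ, 0 ≤ s → ‖S s‖ ≤ M * Real.exp (-μ * s))
    (hScontr : ∀ s : ℝ, 0 ≤ s → ∀ x : H, ‖S s x‖ ≤ ‖x‖)
    (t : ℕ → ℝ) (ht0 : t 0 = 0) (htmono : StrictMono t)
    (htlim : Filter.Tendsto t Filter.atTop Filter.atTop)
    (D : ℕ → H →L[ℝ] H)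
    (hDpos : ∀ (n : ℕ) (x : H), (0:ℝ) ≤ inner ℝ (D n x) x)
    (T0 Ttil : ℝ)
    (hT0 : ∀ n : ℕ, t (2*n+1) - t (2*n) = T0)
    (hT0star : Real.log M / μ < T0)
    (hTt : ∀ n : ℕ, t (2*n+2) - t (2*n+1) = Ttil)
    (d : ℝ) (hd : d < 1)
    (hsup : ∀ n : ℕ, Real.exp (2*‖D n‖*Ttil) * (M * Real.exp (-μ*T0)) ≤ d)
    :
    ∃ C > (0:ℝ), ∃ α > (0:ℝ), ∀ (U : ℝ → H) (U₀ : H) (V : ℝ → H),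
      ContinuousOn U (Set.Ici (0:ℝ)) → U 0 = U₀ →
      (∀ n : ℕ, ∀ s ∈ Set.Icc (t (2*n)) (t (2*n+1)),
        U s = S (s - t (2*n)) (U (t (2*n)))) →
      (∀ n : ℕ, ∀ s ∈ Set.Ioo (t (2*n+1)) (t (2*n+2)),
        HasDerivAt U (V s + D n (U s)) s) →
      (∀ n : ℕ, ∀ s ∈ Set.Ioo (t (2*n+1)) (t (2*n+2)),
        (inner ℝ (U s) (V s) : ℝ) ≤ 0) →
      ∀ r : ℝ, 0 ≤ r → ‖U r‖ ≤ C * Real.exp (-α * r) * ‖U₀‖ :=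
  stmt_11_general S M μ hSbound hScontr t ht0 htmono D T0 Ttil hT0 hTt d hd hsup
end

section
/- Assume T_{2n} ≥ τ and T_{2n} > T* for all n ∈ ℕ, and set c_n := M² e^{−2μ T_{2n}}. Then every trajectory U of the on–off delay system satisfies, for every n ∈ ℕ, the one-step estimate ‖U(t_{2n+2})‖² ≤ e^{2 B_{2n+1} T_{2n+1}} (c_n + T_{2n+1} B_{2n+1}) ‖U(t_{2n})‖². -/
/-!
Write `a = t₂ₙ₊₁`, `D = ‖U t₂ₙ‖²`, `K = M² e^{-2μT₂ₙ} D` and `k = ‖𝓑₂ₙ₊₁‖`. On the off-interval the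
semigroup bound gives `‖U a‖² ≤ K`, and contraction gives `‖U r‖² ≤ D` on `[a - τ, a]`, which
(as `T₂ₙ ≥ τ`) is all the history the delay term sees. On the on-interval, dissipativity and
Young's inequality give `(‖U‖²)'(s) ≤ k ‖U s‖² + k ‖U (s - τ)‖²`. Compare `‖U‖²` with the increasing
barrier `e^{2k(s-a)} (K + ε + (s - a)(k D + ε))`: at a first contact point the delayed value is
bounded by `D` or by an earlier, hence smaller, barrier value, so the barrier grows strictly
faster. Letting `ε → 0` gives the estimate.
-/

open Real Set Filter Topology

theorem eventually_lt_of_hasDerivWithinAt_lt {f g : ℝ → ℝ} {f' g' x : ℝ}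
    (hf : HasDerivWithinAt f f' (Ici x) x) (hg : HasDerivWithinAt g g' (Ici x) x)
    (hfg : f x = g x) (hlt : f' < g') : ∀ᶠ z in 𝓝[>] x, f z < g z := by
  have hslope := (hasDerivWithinAt_iff_tendsto_slope' (lt_irrefl x)).1 (hg.sub hf).Ioi_of_Ici
    (Ioi_mem_nhds (sub_pos.2 hlt))
  filter_upwards [hslope, self_mem_nhdsWithin] with z hz hxz
  have := (slope_pos_iff hxz).1 (show 0 < slope (g - f) x z from hz)
  simpa only [Pi.sub_apply, hfg, sub_self, sub_pos] using this

theorem le_of_hasDerivWithinAt_lt_at_contact {f g : ℝ → ℝ} {a b : ℝ}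
    (hf : ContinuousOn f (Icc a b)) (hg : ContinuousOn g (Icc a b)) (ha : f a < g a)
    (hcontact : ∀ x ∈ Ioo a b, (∀ r ∈ Icc a x, f r ≤ g r) → f x = g x →
      ∃ f' g', HasDerivWithinAt f f' (Ici x) x ∧ HasDerivWithinAt g g' (Ici x) x ∧ f' < g') :
    ∀ x ∈ Icc a b, f x ≤ g x := by
  set s := {x | ∀ r ∈ Icc a x, f r ≤ g r}
  have hclosed : IsClosed (s ∩ Icc a b) := by
    refine isClosed_of_closure_subset fun x hx => ?_
    have hxab : x ∈ Icc a b := closure_minimal inter_subset_right isClosed_Icc hx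
    refine ⟨fun r hr => ?_, hxab⟩
    rcases hr.2.lt_or_eq with hrx | rfl
    · obtain ⟨y, hry, hy, -⟩ := mem_closure_iff.1 hx (Ioi r) isOpen_Ioi hrx
      exact hy r ⟨hr.1, le_of_lt hry⟩
    · have hle : IsClosed (Icc a b ∩ (fun x => (f x, g x)) ⁻¹' {p | p.1 ≤ p.2}) :=
        (hf.prodMk hg).preimage_isClosed_of_isClosed isClosed_Icc OrderClosedTopology.isClosed_le'
      have hsub : s ∩ Icc a b ⊆ Icc a b ∩ (fun x => (f x, g x)) ⁻¹' {p | p.1 ≤ p.2} :=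
        fun y hy => ⟨hy.2, hy.1 y ⟨hy.2.1, le_rfl⟩⟩
      exact (closure_minimal hsub hle hx).2
  have hgt : ∀ x ∈ s ∩ Ico a b, s ∈ 𝓝[>] x := by
    rintro x ⟨hxs, hxab⟩
    have hlt : ∀ᶠ z in 𝓝[>] x, f z < g z := by
      rcases (hxs x ⟨hxab.1, le_rfl⟩).lt_or_eq with hfg | hfg
      · have hx := Ico_subset_Icc_self hxab
        exact nhdsWithin_le_of_mem (Icc_mem_nhdsGT_of_mem hxab) ((hf x hx).eventually_lt (hg x hx) hfg)
      · have hax : a < x := hxab.1.lt_of_ne (by rintro rfl; exact ha.ne hfg)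
        obtain ⟨f', g', hf', hg', hlt⟩ := hcontact x ⟨hax, hxab.2⟩ hxs hfg
        exact eventually_lt_of_hasDerivWithinAt_lt hf' hg' hfg hlt
    obtain ⟨u, hxu, hu⟩ := mem_nhdsGT_iff_exists_Ioo_subset.1 hlt
    filter_upwards [Ioo_mem_nhdsGT hxu] with z hz r hr
    rcases le_or_gt r x with hrx | hxr
    · exact hxs r ⟨hr.1, hrx⟩
    · exact (hu ⟨hxr, hr.2.trans_lt hz.2⟩).le
  have hs := hclosed.Icc_subset_of_forall_mem_nhdsWithin
    (fun r hr => le_antisymm hr.2 hr.1 ▸ ha.le) hgt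
  exact fun x hx => hs hx x ⟨hx.1, le_rfl⟩

section DelayGronwall

variable {f : ℝ → ℝ} {a b τ k D K : ℝ}

theorem le_barrier_of_hasDerivAt_le_delay {ε : ℝ} (hτ : 0 ≤ τ) (hk : 0 ≤ k) (hD : 0 ≤ D)
    (hK : 0 ≤ K) (hε : 0 < ε) (hf : ContinuousOn f (Icc a b)) (hfa : f a ≤ K)
    (hpast : ∀ r ∈ Icc (a - τ) a, f r ≤ D)
    (hderiv : ∀ s ∈ Ioo a b, ∃ d, HasDerivAt f d s ∧ d ≤ k * f s + k * f (s - τ)) :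
    ∀ s ∈ Icc a b, f s ≤ exp (2 * k * (s - a)) * (K + ε + (s - a) * (k * D + ε)) := by
  set G := fun s => exp (2 * k * (s - a)) * (K + ε + (s - a) * (k * D + ε))
  have hG' : ∀ s, HasDerivAt G (2 * k * G s + exp (2 * k * (s - a)) * (k * D + ε)) s := by
    intro s
    have hexp := (((hasDerivAt_id s).sub_const a).const_mul (2 * k)).exp
    have hlin := (((hasDerivAt_id s).sub_const a).mul_const (k * D + ε)).const_add (K + ε)
    refine (hexp.mul hlin).congr_deriv ?_
    simp only [G, id]
    ring
  have hGmono : MonotoneOn G (Ici a) := by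
    intro x hx y _ hxy
    have hxa : 0 ≤ x - a := sub_nonneg.2 hx
    exact mul_le_mul (exp_le_exp.2 (by nlinarith)) (by nlinarith [mul_nonneg hk hD]) (by positivity)
      (exp_pos _).le
  have hG0 : ∀ s ∈ Ici a, 0 ≤ G s := fun s hs => by
    have : 0 ≤ s - a := sub_nonneg.2 hs
    positivity
  have hGa : f a < G a := by simpa [G] using hfa.trans_lt (lt_add_of_pos_right K hε)
  refine le_of_hasDerivWithinAt_lt_at_contact hf
    (fun s _ => (hG' s).continuousAt.continuousWithinAt) hGa ?_
  intro s hs (hbelow : ∀ r ∈ Icc a s, f r ≤ G r) (hfs : f s = G s)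
  obtain ⟨d, hd, hdle⟩ := hderiv s hs
  have hdelay : f (s - τ) ≤ D + G s := by
    rcases le_or_gt (s - τ) a with hsa | has
    · linarith [hpast (s - τ) ⟨by linarith [hs.1], hsa⟩, hG0 s (le_of_lt hs.1)]
    · have := hbelow (s - τ) ⟨has.le, by linarith⟩
      linarith [hGmono has.le (le_of_lt hs.1) (by linarith : s - τ ≤ s), hD]
  have hexp : 1 ≤ exp (2 * k * (s - a)) := one_le_exp (by nlinarith [hs.1])
  refine ⟨d, _, hd.hasDerivWithinAt, (hG' s).hasDerivWithinAt, ?_⟩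
  calc d ≤ k * G s + k * (D + G s) := by rw [← hfs]; nlinarith
    _ < 2 * k * G s + exp (2 * k * (s - a)) * (k * D + ε) := by nlinarith [mul_nonneg hk hD]

theorem le_of_hasDerivAt_le_delay (hab : a ≤ b) (hτ : 0 ≤ τ) (hk : 0 ≤ k) (hD : 0 ≤ D)
    (hK : 0 ≤ K) (hf : ContinuousOn f (Icc a b)) (hfa : f a ≤ K)
    (hpast : ∀ r ∈ Icc (a - τ) a, f r ≤ D)
    (hderiv : ∀ s ∈ Ioo a b, ∃ d, HasDerivAt f d s ∧ d ≤ k * f s + k * f (s - τ)) :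
    f b ≤ exp (2 * k * (b - a)) * (K + (b - a) * k * D) := by
  have hlim : Tendsto (fun ε => exp (2 * k * (b - a)) * (K + ε + (b - a) * (k * D + ε)))
      (𝓝[>] 0) (𝓝 (exp (2 * k * (b - a)) * (K + 0 + (b - a) * (k * D + 0)))) :=
    (Continuous.tendsto (by fun_prop) 0).mono_left nhdsWithin_le_nhds
  refine ge_of_tendsto hlim (eventually_nhdsWithin_of_forall fun ε hε => ?_) |>.trans_eq (by ring)
  exact le_barrier_of_hasDerivAt_le_delay hτ hk hD hK hε hf hfa hpast hderiv b ⟨hab, le_rfl⟩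

end DelayGronwall

theorem two_inner_add_apply_le {E : Type*} [NormedAddCommGroup E] [InnerProductSpace ℝ E]
    (B : E →L[ℝ] E) {x y v : E} (hv : inner ℝ x v ≤ 0) :
    2 * inner ℝ x (v + B y) ≤ ‖B‖ * ‖x‖ ^ 2 + ‖B‖ * ‖y‖ ^ 2 := by
  have hBy : inner ℝ x (B y) ≤ ‖x‖ * (‖B‖ * ‖y‖) :=
    (real_inner_le_norm x (B y)).trans (mul_le_mul_of_nonneg_left (B.le_opNorm y) (norm_nonneg x))
  rw [inner_add_right]
  nlinarith [two_mul_le_add_sq ‖x‖ ‖y‖, norm_nonneg B]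

theorem stmt_12_general
    {H : Type*} [NormedAddCommGroup H] [InnerProductSpace ℝ H]
    (S : ℝ → H →L[ℝ] H) (M μ : ℝ)
    (hSbound : ∀ s : ℝ, 0 ≤ s → ‖S s‖ ≤ M * Real.exp (-μ * s))
    (hScontr : ∀ s : ℝ, 0 ≤ s → ∀ x : H, ‖S s x‖ ≤ ‖x‖)
    (t : ℕ → ℝ) (ht0 : t 0 = 0) (htmono : StrictMono t)
    (τ : ℝ) (hτ : 0 < τ)
    (B : ℕ → H →L[ℝ] H)
    (hT2nτ : ∀ n : ℕ, τ ≤ t (2*n+1) - t (2*n))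
    (U : ℝ → H) (V : ℝ → H)
    (hUcont : ContinuousOn U (Set.Ici (0:ℝ)))
    (hUeven : ∀ n : ℕ, ∀ s ∈ Set.Icc (t (2*n)) (t (2*n+1)),
      U s = S (s - t (2*n)) (U (t (2*n))))
    (hUodd : ∀ n : ℕ, ∀ s ∈ Set.Ioo (t (2*n+1)) (t (2*n+2)),
      HasDerivAt U (V s + B n (U (s - τ))) s)
    (hdiss : ∀ n : ℕ, ∀ s ∈ Set.Ioo (t (2*n+1)) (t (2*n+2)),
      (inner ℝ (U s) (V s) : ℝ) ≤ 0)
    :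
    ∀ n : ℕ,
      ‖U (t (2*n+2))‖^2 ≤
        Real.exp (2*‖B n‖*(t (2*n+2) - t (2*n+1))) *
          (M^2 * Real.exp (-2*μ*(t (2*n+1) - t (2*n))) + (t (2*n+2) - t (2*n+1))*‖B n‖) *
          ‖U (t (2*n))‖^2 := by
  intro n
  have h01 : t (2*n) < t (2*n+1) := htmono (by omega)
  have h12 : t (2*n+1) < t (2*n+2) := htmono (by omega)
  have h1 : 0 ≤ t (2*n+1) := ht0 ▸ htmono.monotone (Nat.zero_le _)
  have hdecay : ‖U (t (2*n+1))‖ ^ 2 ≤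
      M ^ 2 * exp (-2 * μ * (t (2*n+1) - t (2*n))) * ‖U (t (2*n))‖ ^ 2 := by
    rw [hUeven n _ ⟨h01.le, le_rfl⟩]
    calc ‖S _ (U (t (2*n)))‖ ^ 2
        ≤ (M * exp (-μ * (t (2*n+1) - t (2*n))) * ‖U (t (2*n))‖) ^ 2 :=
          pow_le_pow_left₀ (norm_nonneg _)
            ((S _).le_of_opNorm_le (hSbound _ (sub_nonneg.2 h01.le)) _) 2
      _ = _ := by rw [mul_pow, mul_pow, ← exp_nat_mul]; ring_nf
  have hpast : ∀ r ∈ Icc (t (2*n+1) - τ) (t (2*n+1)), ‖U r‖ ^ 2 ≤ ‖U (t (2*n))‖ ^ 2 := by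
    intro r hr
    have hr0 : t (2*n) ≤ r := by linarith [hT2nτ n, hr.1]
    rw [hUeven n r ⟨hr0, hr.2⟩]
    exact pow_le_pow_left₀ (norm_nonneg _) (hScontr _ (sub_nonneg.2 hr0) _) 2
  have hgrowth := le_of_hasDerivAt_le_delay (f := fun s => ‖U s‖ ^ 2) h12.le hτ.le
    (norm_nonneg (B n)) (sq_nonneg _) (by positivity)
    ((hUcont.mono fun s hs => h1.trans hs.1).norm.pow 2) hdecay hpast
    fun s hs => ⟨_, (hUodd n s hs).norm_sq, two_inner_add_apply_le (B n) (hdiss n s hs)⟩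
  exact hgrowth.trans_eq (by ring)

theorem stmt_12
    {H : Type*} [NormedAddCommGroup H] [InnerProductSpace ℝ H]
    (S : ℝ → H →L[ℝ] H) (M μ : ℝ)
    (hM : 1 ≤ M) (hμ : 0 < μ)
    (hS0 : S 0 = ContinuousLinearMap.id ℝ H)
    (hSadd : ∀ s u : ℝ, 0 ≤ s → 0 ≤ u → S (s + u) = (S s).comp (S u))
    (hScont : ∀ x : H, ContinuousOn (fun s => S s x) (Set.Ici (0:ℝ)))
    (hSbound : ∀ s : ℝ, 0 ≤ s → ‖S s‖ ≤ M * Real.exp (-μ * s))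
    (hScontr : ∀ s : ℝ, 0 ≤ s → ∀ x : H, ‖S s x‖ ≤ ‖x‖)
    (t : ℕ → ℝ) (ht0 : t 0 = 0) (htmono : StrictMono t)
    (htlim : Filter.Tendsto t Filter.atTop Filter.atTop)
    (τ : ℝ) (hτ : 0 < τ)
    (B : ℕ → H →L[ℝ] H)
    (hT2nτ : ∀ n : ℕ, τ ≤ t (2*n+1) - t (2*n))
    (hT2nstar : ∀ n : ℕ, Real.log M / μ < t (2*n+1) - t (2*n))
    (U : ℝ → H) (U₀ : H) (V : ℝ → H)
    (hUcont : ContinuousOn U (Set.Ici (0:ℝ))) (hU0 : U 0 = U₀)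
    (hUeven : ∀ n : ℕ, ∀ s ∈ Set.Icc (t (2*n)) (t (2*n+1)),
      U s = S (s - t (2*n)) (U (t (2*n))))
    (hUodd : ∀ n : ℕ, ∀ s ∈ Set.Ioo (t (2*n+1)) (t (2*n+2)),
      HasDerivAt U (V s + B n (U (s - τ))) s)
    (hdiss : ∀ n : ℕ, ∀ s ∈ Set.Ioo (t (2*n+1)) (t (2*n+2)),
      (inner ℝ (U s) (V s) : ℝ) ≤ 0)
    :
    ∀ n : ℕ,
      ‖U (t (2*n+2))‖^2 ≤
        Real.exp (2*‖B n‖*(t (2*n+2) - t (2*n+1))) *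
          (M^2 * Real.exp (-2*μ*(t (2*n+1) - t (2*n))) + (t (2*n+2) - t (2*n+1))*‖B n‖) *
          ‖U (t (2*n))‖^2 :=
  stmt_12_general S M μ hSbound hScontr t ht0 htmono τ hτ B hT2nτ U V hUcont hUeven hUodd hdiss
end

section
/- Assume T_{2n} ≥ τ and T_{2n} > T* for all n ∈ ℕ, and set c_n := M² e^{−2μ T_{2n}}. Then every trajectory U of the on–off delay system with initial datum U₀ satisfies, for every n ∈ ℕ, the iterated estimate ‖U(t_{2n+2})‖² ≤ [ ∏_{k=0}^{n} e^{2 B_{2k+1} T_{2k+1}} (c_k + T_{2k+1} B_{2k+1}) ] · ‖U₀‖². -/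
/-!
Write `E = ‖U‖²`. On an off interval `[p, a]` the semigroup is a contraction, so `E ≤ E p` there,
and `E a ≤ M² e^{-2μ(a-p)} E p`. On the following on interval `(a, b)`, dissipativity and
Cauchy–Schwarz give the delayed inequality `E' s ≤ ‖B‖ (E s + E (s - τ))`; because the off interval
is at least `τ` long, for `s ≤ a + τ` the delayed value lies in `[p, a]` and is at most `E p`.
The functional `E s + ‖B‖ ∫_{max a (s - τ)}^s E` then has derivative at most `2‖B‖` times itself
plus `‖B‖ E p`, and an exponential Gronwall bound gives
`E b ≤ e^{2‖B‖(b-a)} (E a + ‖B‖ (b - a) E p)`, one factor of the product. Iterate over the cycles.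
-/

open Set Real

lemma le_exp_mul_mul_add_of_hasDerivAt_le {f f' : ℝ → ℝ} {a b K ε : ℝ} (hab : a ≤ b)
    (hK : 0 ≤ K) (hε : 0 ≤ ε) (hf : ContinuousOn f (Icc a b))
    (hf' : ∀ x ∈ Ioo a b, HasDerivAt f (f' x) x)
    (hbound : ∀ x ∈ Ioo a b, f' x ≤ K * f x + ε) :
    f b ≤ exp (K * (b - a)) * (f a + ε * (b - a)) := by
  set φ : ℝ → ℝ := fun x => exp (-K * (x - a)) * f x - ε * (x - a)
  have hφ : AntitoneOn φ (Icc a b) := by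
    refine antitoneOn_of_hasDerivWithinAt_nonpos (convex_Icc a b) ?_ (fun x hx => ?_)
      (f' := fun x => exp (-K * (x - a)) * (f' x - K * f x) - ε) (fun x hx => ?_)
    · fun_prop
    · rw [interior_Icc] at hx
      have hexp : HasDerivAt (fun y => exp (-K * (y - a))) (exp (-K * (x - a)) * (-K * 1)) x :=
        (((hasDerivAt_id' x).sub_const a).const_mul (-K)).exp
      have hlin := ((hasDerivAt_id' x).sub_const a).const_mul ε
      exact ((hexp.mul (hf' x hx)).sub hlin).hasDerivWithinAt.congr_deriv (by ring)
    · rw [interior_Icc] at hx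
      have h1 : exp (-K * (x - a)) ≤ 1 := exp_le_one_iff.2 (by nlinarith [hx.1])
      have h2 : f' x - K * f x ≤ ε := by linarith [hbound x hx]
      nlinarith [exp_pos (-K * (x - a))]
  have key : φ b ≤ φ a := hφ ⟨le_rfl, hab⟩ ⟨hab, le_rfl⟩ hab
  simp only [φ, sub_self, mul_zero, exp_zero, one_mul, sub_zero] at key
  calc f b = exp (K * (b - a)) * (exp (-K * (b - a)) * f b) := by
        rw [← mul_assoc, ← exp_add]; simp
    _ ≤ exp (K * (b - a)) * (f a + ε * (b - a)) := by gcongr; linarith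

lemma hasDerivAt_integral_of_continuousOn {f : ℝ → ℝ} {a b c x : ℝ}
    (hf : ContinuousOn f (Icc a b)) (hc : c ∈ Icc a b) (hx : x ∈ Ioo a b) :
    HasDerivAt (fun u => ∫ σ in c..u, f σ) (f x) x :=
  intervalIntegral.integral_hasDerivAt_right
    (hf.mono (uIcc_subset_Icc hc (Ioo_subset_Icc_self hx))).intervalIntegrable
    ((hf.mono Ioo_subset_Icc_self).stronglyMeasurableAtFilter isOpen_Ioo x hx)
    (hf.continuousAt (Icc_mem_nhds hx.1 hx.2))

lemma add_mul_integral_le_of_hasDerivAt_le {E E' : ℝ → ℝ} {a b β C : ℝ} (hab : a ≤ b)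
    (hβ : 0 ≤ β) (hC : 0 ≤ C) (hE : ContinuousOn E (Icc a b))
    (hE0 : ∀ s ∈ Icc a b, 0 ≤ E s) (hE' : ∀ s ∈ Ioo a b, HasDerivAt E (E' s) s)
    (hbound : ∀ s ∈ Ioo a b, E' s ≤ β * (E s + C)) :
    E b + β * ∫ σ in a..b, E σ ≤ exp (2 * β * (b - a)) * (E a + β * C * (b - a)) := by
  have hprim : ContinuousOn (fun s => ∫ σ in a..s, E σ) (Icc a b) := by
    simpa only [uIcc_of_le hab] using
      intervalIntegral.continuousOn_primitive_interval' (hE.intervalIntegrable_of_Icc hab)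
        left_mem_uIcc
  have key := le_exp_mul_mul_add_of_hasDerivAt_le (f := fun s => E s + β * ∫ σ in a..s, E σ)
    (K := 2 * β) (ε := β * C) hab (by positivity) (mul_nonneg hβ hC)
    (hE.add (continuousOn_const.mul hprim))
    (fun x hx => (hE' x hx).add
      ((hasDerivAt_integral_of_continuousOn hE (left_mem_Icc.2 hab) hx).const_mul β))
    (fun x hx => by
      have hint : 0 ≤ ∫ σ in a..x, E σ := intervalIntegral.integral_nonneg hx.1.le
        fun u hu => hE0 u ⟨hu.1, hu.2.trans hx.2.le⟩
      nlinarith [hbound x hx, mul_nonneg (mul_nonneg hβ hβ) hint])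
  simpa only [intervalIntegral.integral_same, mul_zero, add_zero] using key

lemma add_mul_integral_delay_le_of_hasDerivAt_le {E E' : ℝ → ℝ} {a b τ β : ℝ} (hab : a ≤ b)
    (hτ : 0 ≤ τ) (hβ : 0 ≤ β) (hE : ContinuousOn E (Icc (a - τ) b))
    (hE0 : ∀ s ∈ Icc (a - τ) b, 0 ≤ E s) (hE' : ∀ s ∈ Ioo a b, HasDerivAt E (E' s) s)
    (hbound : ∀ s ∈ Ioo a b, E' s ≤ β * (E s + E (s - τ))) :
    E b + β * ∫ σ in (b - τ)..b, E σ ≤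
      exp (2 * β * (b - a)) * (E a + β * ∫ σ in (a - τ)..a, E σ) := by
  set P : ℝ → ℝ := fun u => ∫ σ in (a - τ)..u, E σ
  have hint : ∀ u ∈ Icc (a - τ) b, IntervalIntegrable E MeasureTheory.volume (a - τ) u :=
    fun u hu => (hE.mono (Icc_subset_Icc le_rfl hu.2)).intervalIntegrable_of_Icc hu.1
  have hwindow : ∀ s ∈ Icc a b, P s - P (s - τ) = ∫ σ in (s - τ)..s, E σ := fun s hs =>
    intervalIntegral.integral_interval_sub_left (hint s ⟨by linarith [hs.1], hs.2⟩)
      (hint (s - τ) ⟨by linarith [hs.1], by linarith [hs.2]⟩)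
  have hwindow_nonneg : ∀ s ∈ Icc a b, 0 ≤ ∫ σ in (s - τ)..s, E σ := fun s hs =>
    intervalIntegral.integral_nonneg (by linarith) fun u hu =>
      hE0 u ⟨by linarith [hu.1, hs.1], hu.2.trans hs.2⟩
  have hP : ContinuousOn P (Icc (a - τ) b) := by
    simpa only [uIcc_of_le (show a - τ ≤ b by linarith)] using
      intervalIntegral.continuousOn_primitive_interval'
        (hE.intervalIntegrable_of_Icc (by linarith)) left_mem_uIcc
  have hP' : ∀ x ∈ Ioo (a - τ) b, HasDerivAt P (E x) x := fun x hx =>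
    hasDerivAt_integral_of_continuousOn hE (left_mem_Icc.2 (by linarith [hx.1, hx.2])) hx
  have hPshift : ∀ x ∈ Ioo a b, HasDerivAt (fun s => P (s - τ)) (E (x - τ)) x := fun x hx => by
    have hxτ : x - τ ∈ Ioo (a - τ) b := ⟨by linarith [hx.1], by linarith [hx.2]⟩
    have := (hP' (x - τ) hxτ).comp x ((hasDerivAt_id' x).sub_const τ)
    rwa [mul_one] at this
  have key := le_exp_mul_mul_add_of_hasDerivAt_le (f := fun s => E s + β * (P s - P (s - τ)))
    (K := 2 * β) (ε := 0) hab (by positivity) le_rfl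
    ((hE.mono (Icc_subset_Icc (by linarith) le_rfl)).add (continuousOn_const.mul
      ((hP.mono (Icc_subset_Icc (by linarith) le_rfl)).sub (hP.comp
        (continuousOn_id.sub continuousOn_const)
        fun s hs => ⟨by linarith [hs.1], by linarith [hs.2]⟩))))
    (fun x hx => (hE' x hx).add (((hP' x ⟨by linarith [hx.1], hx.2⟩).sub
      (hPshift x hx)).const_mul β))
    (fun x hx => by
      have := hwindow_nonneg x (Ioo_subset_Icc_self hx)
      rw [← hwindow x (Ioo_subset_Icc_self hx)] at this
      nlinarith [hbound x hx, mul_nonneg (mul_nonneg hβ hβ) this])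
  simpa only [hwindow b (right_mem_Icc.2 hab), P, intervalIntegral.integral_same, sub_zero,
    zero_mul, add_zero] using key

lemma le_exp_mul_of_hasDerivAt_le_delay {E E' : ℝ → ℝ} {a b τ β C : ℝ} (hab : a ≤ b)
    (hτ : 0 ≤ τ) (hβ : 0 ≤ β) (hE : ContinuousOn E (Icc a b)) (hE0 : ∀ s ∈ Icc a b, 0 ≤ E s)
    (hE' : ∀ s ∈ Ioo a b, HasDerivAt E (E' s) s)
    (hbound : ∀ s ∈ Ioo a b, E' s ≤ β * (E s + E (s - τ)))
    (hhist : ∀ s ∈ Icc (a - τ) a, E s ≤ C) :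
    E b ≤ exp (2 * β * (b - a)) * (E a + β * C * (b - a)) := by
  have hC : 0 ≤ C := (hE0 a (left_mem_Icc.2 hab)).trans (hhist a ⟨by linarith, le_rfl⟩)
  have initial : ∀ d ∈ Icc a b, d ≤ a + τ →
      E d + β * ∫ σ in a..d, E σ ≤ exp (2 * β * (d - a)) * (E a + β * C * (d - a)) :=
    fun d hd hdτ => add_mul_integral_le_of_hasDerivAt_le hd.1 hβ hC
      (hE.mono (Icc_subset_Icc le_rfl hd.2)) (fun s hs => hE0 s ⟨hs.1, hs.2.trans hd.2⟩)
      (fun s hs => hE' s ⟨hs.1, hs.2.trans_le hd.2⟩) fun s hs => by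
        have := hhist (s - τ) ⟨by linarith [hs.1], by linarith [hs.2]⟩
        nlinarith [hbound s ⟨hs.1, hs.2.trans_le hd.2⟩]
  have hint_nonneg : ∀ c d, c ≤ d → Icc c d ⊆ Icc a b → 0 ≤ β * ∫ σ in c..d, E σ :=
    fun c d hcd hsub =>
      mul_nonneg hβ (intervalIntegral.integral_nonneg hcd fun u hu => hE0 u (hsub hu))
  rcases le_or_gt b (a + τ) with hshort | hlong
  · have := hint_nonneg a b hab le_rfl
    linarith [initial b (right_mem_Icc.2 hab) hshort]
  · have later := add_mul_integral_delay_le_of_hasDerivAt_le (a := a + τ) hlong.le hτ hβ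
      (by rwa [add_sub_cancel_right]) (by rwa [add_sub_cancel_right])
      (fun s hs => hE' s ⟨by linarith [hs.1], hs.2⟩) fun s hs => hbound s ⟨by linarith [hs.1], hs.2⟩
    rw [add_sub_cancel_right] at later
    calc E b ≤ E b + β * ∫ σ in (b - τ)..b, E σ :=
          le_add_of_nonneg_right
            (hint_nonneg _ _ (by linarith) (Icc_subset_Icc (by linarith) le_rfl))
      _ ≤ exp (2 * β * (b - (a + τ))) * (E (a + τ) + β * ∫ σ in a..(a + τ), E σ) := later
      _ ≤ exp (2 * β * (b - (a + τ))) * (exp (2 * β * τ) * (E a + β * C * τ)) := by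
          gcongr
          simpa using initial (a + τ) ⟨by linarith, hlong.le⟩ le_rfl
      _ = exp (2 * β * (b - a)) * (E a + β * C * τ) := by
          rw [← mul_assoc, ← exp_add]; ring_nf
      _ ≤ exp (2 * β * (b - a)) * (E a + β * C * (b - a)) := by
          gcongr; linarith

section OnOffCycle

variable {H : Type*} [NormedAddCommGroup H] [InnerProductSpace ℝ H]

lemma two_mul_inner_add_apply_le_of_inner_nonpos {u v w : H} (L : H →L[ℝ] H)
    (hv : inner ℝ u v ≤ 0) : 2 * inner ℝ u (v + L w) ≤ ‖L‖ * (‖u‖ ^ 2 + ‖w‖ ^ 2) := by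
  have hLw : inner ℝ u (L w) ≤ ‖u‖ * (‖L‖ * ‖w‖) :=
    (real_inner_le_norm u (L w)).trans (by gcongr; exact L.le_opNorm w)
  rw [inner_add_right]
  nlinarith [norm_nonneg L, mul_nonneg (norm_nonneg L) (sq_nonneg (‖u‖ - ‖w‖))]

lemma norm_sq_le_of_off_on {S : ℝ → H →L[ℝ] H} {L : H →L[ℝ] H} {U V : ℝ → H}
    {M μ τ p a b : ℝ} (hτ : 0 ≤ τ) (hτpa : τ ≤ a - p) (hab : a ≤ b)
    (hSbound : ∀ s : ℝ, 0 ≤ s → ‖S s‖ ≤ M * exp (-μ * s))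
    (hScontr : ∀ s : ℝ, 0 ≤ s → ∀ x : H, ‖S s x‖ ≤ ‖x‖)
    (hUcont : ContinuousOn U (Icc a b)) (hUoff : ∀ s ∈ Icc p a, U s = S (s - p) (U p))
    (hUon : ∀ s ∈ Ioo a b, HasDerivAt U (V s + L (U (s - τ))) s)
    (hdiss : ∀ s ∈ Ioo a b, inner ℝ (U s) (V s) ≤ 0) :
    ‖U b‖ ^ 2 ≤ exp (2 * ‖L‖ * (b - a)) *
      (M ^ 2 * exp (-2 * μ * (a - p)) + (b - a) * ‖L‖) * ‖U p‖ ^ 2 := by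
  have hUa : ‖U a‖ ^ 2 ≤ M ^ 2 * exp (-2 * μ * (a - p)) * ‖U p‖ ^ 2 := by
    have h : ‖U a‖ ≤ M * exp (-μ * (a - p)) * ‖U p‖ := by
      rw [hUoff a ⟨by linarith, le_rfl⟩]
      exact ((S (a - p)).le_opNorm _).trans (by gcongr; exact hSbound _ (by linarith))
    calc ‖U a‖ ^ 2 ≤ (M * exp (-μ * (a - p)) * ‖U p‖) ^ 2 := by gcongr
      _ = M ^ 2 * exp (-2 * μ * (a - p)) * ‖U p‖ ^ 2 := by
          rw [mul_pow, mul_pow, ← exp_nat_mul]; ring_nf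
  have hdelay := le_exp_mul_of_hasDerivAt_le_delay (E := fun s => ‖U s‖ ^ 2)
    (C := ‖U p‖ ^ 2) hab hτ (norm_nonneg L) (hUcont.norm.pow 2) (fun _ _ => by positivity)
    (fun s hs => (hUon s hs).norm_sq)
    (fun s hs => two_mul_inner_add_apply_le_of_inner_nonpos L (hdiss s hs)) fun s hs => by
      rw [hUoff s ⟨by linarith [hs.1], hs.2⟩]
      gcongr
      exact hScontr _ (by linarith [hs.1]) _
  calc ‖U b‖ ^ 2 ≤ exp (2 * ‖L‖ * (b - a)) * (‖U a‖ ^ 2 + ‖L‖ * ‖U p‖ ^ 2 * (b - a)) := hdelay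
    _ ≤ exp (2 * ‖L‖ * (b - a)) *
        (M ^ 2 * exp (-2 * μ * (a - p)) * ‖U p‖ ^ 2 + ‖L‖ * ‖U p‖ ^ 2 * (b - a)) := by gcongr
    _ = _ := by ring

end OnOffCycle

lemma le_prod_mul_of_le_mul {x F : ℕ → ℝ} (hF : ∀ n, 0 ≤ F n) (h : ∀ n, x (n + 1) ≤ F n * x n)
    (n : ℕ) : x n ≤ (∏ k ∈ Finset.range n, F k) * x 0 := by
  induction n with
  | zero => simp
  | succ n ih =>
    calc x (n + 1) ≤ F n * x n := h n
      _ ≤ F n * ((∏ k ∈ Finset.range n, F k) * x 0) := by gcongr; exact hF n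
      _ = (∏ k ∈ Finset.range (n + 1), F k) * x 0 := by rw [Finset.prod_range_succ]; ring

theorem stmt_13_general
    {H : Type*} [NormedAddCommGroup H] [InnerProductSpace ℝ H]
    (S : ℝ → H →L[ℝ] H) (M μ : ℝ)
    (hSbound : ∀ s : ℝ, 0 ≤ s → ‖S s‖ ≤ M * Real.exp (-μ * s))
    (hScontr : ∀ s : ℝ, 0 ≤ s → ∀ x : H, ‖S s x‖ ≤ ‖x‖)
    (t : ℕ → ℝ) (ht0 : t 0 = 0) (htmono : StrictMono t)
    (τ : ℝ) (hτ : 0 < τ)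
    (B : ℕ → H →L[ℝ] H)
    (hT2nτ : ∀ n : ℕ, τ ≤ t (2*n+1) - t (2*n))
    (U : ℝ → H) (U₀ : H) (V : ℝ → H)
    (hUcont : ContinuousOn U (Set.Ici (0:ℝ))) (hU0 : U 0 = U₀)
    (hUeven : ∀ n : ℕ, ∀ s ∈ Set.Icc (t (2*n)) (t (2*n+1)),
      U s = S (s - t (2*n)) (U (t (2*n))))
    (hUodd : ∀ n : ℕ, ∀ s ∈ Set.Ioo (t (2*n+1)) (t (2*n+2)),
      HasDerivAt U (V s + B n (U (s - τ))) s)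
    (hdiss : ∀ n : ℕ, ∀ s ∈ Set.Ioo (t (2*n+1)) (t (2*n+2)),
      (inner ℝ (U s) (V s) : ℝ) ≤ 0)
    :
    ∀ n : ℕ,
      ‖U (t (2*n+2))‖^2 ≤
        (∏ k ∈ Finset.range (n+1),
          Real.exp (2*‖B k‖*(t (2*k+2) - t (2*k+1))) *
            (M^2 * Real.exp (-2*μ*(t (2*k+1) - t (2*k))) + (t (2*k+2) - t (2*k+1))*‖B k‖)) *
          ‖U₀‖^2 := by
  have ht_nonneg (m : ℕ) : 0 ≤ t m := ht0 ▸ htmono.monotone (Nat.zero_le m)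
  have hodd_le (k : ℕ) : t (2 * k + 1) ≤ t (2 * k + 2) := htmono.monotone (by omega)
  have hcycle (k : ℕ) := norm_sq_le_of_off_on hτ.le (hT2nτ k) (hodd_le k) hSbound hScontr
    (hUcont.mono fun s hs => (ht_nonneg _).trans hs.1) (hUeven k) (hUodd k) (hdiss k)
  intro n
  simpa [ht0, hU0, mul_add] using le_prod_mul_of_le_mul (x := fun k => ‖U (t (2 * k))‖ ^ 2)
    (fun k => mul_nonneg (exp_pos _).le
      (add_nonneg (by positivity) (mul_nonneg (sub_nonneg.2 (hodd_le k)) (norm_nonneg _))))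
    hcycle (n + 1)

theorem stmt_13
    {H : Type*} [NormedAddCommGroup H] [InnerProductSpace ℝ H]
    (S : ℝ → H →L[ℝ] H) (M μ : ℝ)
    (hM : 1 ≤ M) (hμ : 0 < μ)
    (hS0 : S 0 = ContinuousLinearMap.id ℝ H)
    (hSadd : ∀ s u : ℝ, 0 ≤ s → 0 ≤ u → S (s + u) = (S s).comp (S u))
    (hScont : ∀ x : H, ContinuousOn (fun s => S s x) (Set.Ici (0:ℝ)))
    (hSbound : ∀ s : ℝ, 0 ≤ s → ‖S s‖ ≤ M * Real.exp (-μ * s))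
    (hScontr : ∀ s : ℝ, 0 ≤ s → ∀ x : H, ‖S s x‖ ≤ ‖x‖)
    (t : ℕ → ℝ) (ht0 : t 0 = 0) (htmono : StrictMono t)
    (htlim : Filter.Tendsto t Filter.atTop Filter.atTop)
    (τ : ℝ) (hτ : 0 < τ)
    (B : ℕ → H →L[ℝ] H)
    (hT2nτ : ∀ n : ℕ, τ ≤ t (2*n+1) - t (2*n))
    (hT2nstar : ∀ n : ℕ, Real.log M / μ < t (2*n+1) - t (2*n))
    (U : ℝ → H) (U₀ : H) (V : ℝ → H)
    (hUcont : ContinuousOn U (Set.Ici (0:ℝ))) (hU0 : U 0 = U₀)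
    (hUeven : ∀ n : ℕ, ∀ s ∈ Set.Icc (t (2*n)) (t (2*n+1)),
      U s = S (s - t (2*n)) (U (t (2*n))))
    (hUodd : ∀ n : ℕ, ∀ s ∈ Set.Ioo (t (2*n+1)) (t (2*n+2)),
      HasDerivAt U (V s + B n (U (s - τ))) s)
    (hdiss : ∀ n : ℕ, ∀ s ∈ Set.Ioo (t (2*n+1)) (t (2*n+2)),
      (inner ℝ (U s) (V s) : ℝ) ≤ 0)
    :
    ∀ n : ℕ,
      ‖U (t (2*n+2))‖^2 ≤
        (∏ k ∈ Finset.range (n+1),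
          Real.exp (2*‖B k‖*(t (2*k+2) - t (2*k+1))) *
            (M^2 * Real.exp (-2*μ*(t (2*k+1) - t (2*k))) + (t (2*k+2) - t (2*k+1))*‖B k‖)) *
          ‖U₀‖^2 :=
  stmt_13_general S M μ hSbound hScontr t ht0 htmono τ hτ B hT2nτ U U₀ V hUcont hU0 hUeven hUodd
    hdiss
end

section
/- Assume T_{2n} ≥ τ and T_{2n} > T* for all n ∈ ℕ, and set c_n := M² e^{−2μ T_{2n}}. Then every trajectory U of the on–off delay system satisfies, for every n ∈ ℕ and every t ∈ [t_{2n+1}, t_{2n+2}), the interior estimate ‖U(t)‖² ≤ e^{2 B_{2n+1} T_{2n+1}} (c_n + B_{2n+1} T_{2n+1}) ‖U(t_{2n})‖². -/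
/-!
On an odd interval `[a, c] = [t (2n+1), t (2n+2)]`, dissipativity, Cauchy–Schwarz and AM–GM give
`(‖U‖²)' ≤ β (‖U s‖² + ‖U (s - τ)‖²)` with `β = ‖B n‖`. The delayed term is absorbed by the
Lyapunov functional `‖U s‖² + β ∫_{max (s - τ) a}^s ‖U‖²`, whose right derivative is at most
`2β` times itself plus `β D`, where `D = ‖U (t (2n))‖²` bounds the delayed values that fall into the
preceding even interval (there `U` is a contraction orbit, and `τ ≤ T_{2n}`). Grönwall's inequality
then bounds `‖U‖²` on `[a, c]` in terms of `‖U a‖² ≤ M² e^{-2μ T_{2n}} D`.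
-/

open Set Real

theorem continuous_gronwallBound (K ε : ℝ) :
    Continuous fun p : ℝ × ℝ => gronwallBound p.1 K ε p.2 := by
  by_cases hK : K = 0
  · simp only [gronwallBound_K0, hK]
    fun_prop
  · simp only [gronwallBound_of_K_ne_0 hK]
    fun_prop

theorem gronwallBound_le_add_mul_mul_exp {δ K ε x : ℝ} (hK : 0 ≤ K) (hε : 0 ≤ ε) :
    gronwallBound δ K ε x ≤ (δ + ε * x) * exp (K * x) := by
  rcases hK.eq_or_lt with rfl | hK
  · simp [gronwallBound_K0]
  rw [gronwallBound_of_K_ne_0 hK.ne']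
  -- `1 - y ≤ exp (-y)`, multiplied by `exp y`
  have hexp : exp (K * x) - 1 ≤ K * x * exp (K * x) := by
    have h := mul_le_mul_of_nonneg_right (add_one_le_exp (-(K * x))) (exp_pos (K * x)).le
    rw [← exp_add, neg_add_cancel, exp_zero] at h
    linarith
  have hε_term : ε / K * (exp (K * x) - 1) ≤ ε * x * exp (K * x) := by
    calc ε / K * (exp (K * x) - 1) ≤ ε / K * (K * x * exp (K * x)) := by gcongr
      _ = ε * x * exp (K * x) := by field_simp
  linarith

theorem le_gronwallBound_of_hasDerivWithinAt_Ioo {f f' : ℝ → ℝ} {K ε a b : ℝ}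
    (hf : ContinuousOn f (Icc a b))
    (hf' : ∀ x ∈ Ioo a b, HasDerivWithinAt f (f' x) (Ici x) x)
    (bound : ∀ x ∈ Ioo a b, f' x ≤ K * f x + ε) :
    ∀ x ∈ Icc a b, f x ≤ gronwallBound (f a) K ε (x - a) := by
  intro x ⟨hax, hxb⟩
  rcases hax.eq_or_lt with rfl | hax
  · rw [sub_self, gronwallBound_x0]
  have hstart : ∀ a' ∈ Ioc a x, f x ≤ gronwallBound (f a') K ε (x - a') := fun a' ha' =>
    le_gronwallBound_of_liminf_deriv_right_le (hf.mono (Icc_subset_Icc ha'.1.le hxb))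
      (fun y hy r hr => by
        simpa only [slope_def_field, div_eq_inv_mul] using
          (hf' y ⟨ha'.1.trans_le hy.1, hy.2.trans_le hxb⟩).liminf_right_slope_le hr)
      le_rfl
      (fun y hy => bound y ⟨ha'.1.trans_le hy.1, hy.2.trans_le hxb⟩)
      x ⟨ha'.2, le_rfl⟩
  have hcont : ContinuousWithinAt (fun a' => gronwallBound (f a') K ε (x - a')) (Ioc a x) a :=
    (continuous_gronwallBound K ε).continuousAt.comp_continuousWithinAt
      (((hf a ⟨le_rfl, hax.le.trans hxb⟩).mono (Ioc_subset_Icc_self.trans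
        (Icc_subset_Icc le_rfl hxb))).prodMk (continuousWithinAt_const.sub continuousWithinAt_id))
  exact ContinuousWithinAt.closure_le (x := a) (f := fun _ => f x)
    (by simp [closure_Ioc hax.ne, hax.le]) continuousWithinAt_const hcont hstart

theorem integral_max_sub_eq_sub {g : ℝ → ℝ} (hg : Continuous g) (a τ s : ℝ) :
    ∫ u in max (s - τ) a..s, g u = (∫ u in a..s, g u) - ∫ u in a..max (s - τ) a, g u :=
  (intervalIntegral.integral_interval_sub_left
    (hg.intervalIntegrable _ _) (hg.intervalIntegrable _ _)).symm

theorem continuous_integral_max_sub {g : ℝ → ℝ} (hg : Continuous g) (a τ : ℝ) :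
    Continuous fun s => ∫ u in max (s - τ) a..s, g u := by
  simp_rw [integral_max_sub_eq_sub hg]
  have hP := intervalIntegral.continuous_primitive (μ := MeasureTheory.volume)
    (fun _ _ => hg.intervalIntegrable _ _) a
  exact hP.sub (hP.comp (by fun_prop))

theorem hasDerivWithinAt_integral_max_sub {g : ℝ → ℝ} (hg : Continuous g) (a τ x : ℝ) :
    HasDerivWithinAt (fun s => ∫ u in max (s - τ) a..s, g u)
      (g x - if a ≤ x - τ then g (x - τ) else 0) (Ici x) x := by
  set P : ℝ → ℝ := fun s => ∫ u in a..s, g u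
  have hP : ∀ s, HasDerivAt P (g s) s := fun s => (hg.integral_hasStrictDerivAt a s).hasDerivAt
  simp_rw [integral_max_sub_eq_sub hg]
  refine (hP x).hasDerivWithinAt.sub ?_
  split_ifs with hx
  · refine ((hP (x - τ)).comp_sub_const x τ).hasDerivWithinAt.congr (fun u hu => ?_) ?_
    · rw [max_eq_left (by linarith [mem_Ici.1 hu])]
    · rw [max_eq_left hx]
  · have hconst : (fun s => P (max (s - τ) a)) =ᶠ[nhds x] fun _ => P a := by
      filter_upwards [Iio_mem_nhds (show x < a + τ by linarith)] with u hu
      rw [max_eq_right (by linarith [mem_Iio.1 hu])]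
    exact ((hasDerivAt_const x (P a)).congr_of_eventuallyEq hconst).hasDerivWithinAt

theorem le_add_mul_mul_exp_of_delay_deriv_le {f f' : ℝ → ℝ} {a c τ α β D : ℝ}
    (hτ : 0 ≤ τ) (hα : 0 ≤ α) (hβ : 0 ≤ β) (hD : 0 ≤ D)
    (hf : ContinuousOn f (Icc a c)) (hf0 : ∀ s ∈ Icc a c, 0 ≤ f s)
    (hf' : ∀ s ∈ Ioo a c, HasDerivAt f (f' s) s)
    (bound : ∀ s ∈ Ioo a c, f' s ≤ α * f s + β * f (s - τ))
    (hist : ∀ s ∈ Ioo a c, s - τ < a → f (s - τ) ≤ D) :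
    ∀ r ∈ Icc a c, f r ≤ (f a + β * D * (r - a)) * exp ((α + β) * (r - a)) := by
  intro r hr
  have hac : a ≤ c := hr.1.trans hr.2
  -- continuous on all of `ℝ`, so that its primitive is differentiable everywhere
  set g := IccExtend hac ((Icc a c).domRestrict f)
  have hg : Continuous g := (continuousOn_iff_continuous_domRestrict.1 hf).Icc_extend'
  have hgf : ∀ s ∈ Icc a c, g s = f s := fun s hs => IccExtend_of_mem hac _ hs
  have hg0 : ∀ s, 0 ≤ g s := fun s => hf0 _ (projIcc a c hac s).2
  set V : ℝ → ℝ := fun s => f s + β * ∫ u in max (s - τ) a..s, g u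
  have hV_a : V a = f a := by simp [V, hτ]
  have hfV : ∀ s ∈ Icc a c, f s ≤ V s := fun s hs => le_add_of_nonneg_right <|
    mul_nonneg hβ <| intervalIntegral.integral_nonneg (max_le (by linarith) hs.1) fun u _ => hg0 u
  have hV_cont : ContinuousOn V (Icc a c) :=
    hf.add (continuous_const.mul (continuous_integral_max_sub hg a τ)).continuousOn
  have hV' : ∀ s ∈ Ioo a c, HasDerivWithinAt V
      (f' s + β * (g s - if a ≤ s - τ then g (s - τ) else 0)) (Ici s) s := fun s hs =>
    (hf' s hs).hasDerivWithinAt.add ((hasDerivWithinAt_integral_max_sub hg a τ s).const_mul β)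
  have hV'_le : ∀ s ∈ Ioo a c,
      f' s + β * (g s - if a ≤ s - τ then g (s - τ) else 0) ≤ (α + β) * V s + β * D := by
    intro s hs
    have hs' : s ∈ Icc a c := Ioo_subset_Icc_self hs
    rw [hgf s hs']
    have hfs := bound s hs
    have hfV_mul : (α + β) * f s ≤ (α + β) * V s := by gcongr; exact hfV s hs'
    have hβD := mul_nonneg hβ hD
    split_ifs with hsτ
    · rw [hgf _ ⟨hsτ, by linarith [hs.2]⟩]
      linarith
    · linarith [mul_le_mul_of_nonneg_left (hist s hs (not_le.1 hsτ)) hβ]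
  calc f r ≤ V r := hfV r hr
    _ ≤ gronwallBound (V a) (α + β) (β * D) (r - a) :=
      le_gronwallBound_of_hasDerivWithinAt_Ioo hV_cont hV' hV'_le r hr
    _ ≤ (f a + β * D * (r - a)) * exp ((α + β) * (r - a)) := by
      rw [hV_a]
      exact gronwallBound_le_add_mul_mul_exp (by positivity) (by positivity)

theorem two_mul_inner_add_apply_le {H : Type*} [NormedAddCommGroup H] [InnerProductSpace ℝ H]
    {x v y : H} (B : H →L[ℝ] H) (hv : inner ℝ x v ≤ 0) :
    2 * inner ℝ x (v + B y) ≤ ‖B‖ * (‖x‖ ^ 2 + ‖y‖ ^ 2) := by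
  have hBy : inner ℝ x (B y) ≤ ‖B‖ * (‖x‖ * ‖y‖) :=
    calc inner ℝ x (B y) ≤ ‖x‖ * ‖B y‖ := real_inner_le_norm _ _
      _ ≤ ‖x‖ * (‖B‖ * ‖y‖) := by gcongr; exact B.le_opNorm y
      _ = ‖B‖ * (‖x‖ * ‖y‖) := by ring
  have hamgm : 2 * ‖x‖ * ‖y‖ ≤ ‖x‖ ^ 2 + ‖y‖ ^ 2 := two_mul_le_add_sq _ _
  rw [inner_add_right]
  nlinarith [mul_le_mul_of_nonneg_left hamgm (norm_nonneg B)]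

theorem sq_norm_apply_le_of_opNorm_le_mul_exp {E F : Type*} [SeminormedAddCommGroup E]
    [SeminormedAddCommGroup F] [NormedSpace ℝ E] [NormedSpace ℝ F] (A : E →L[ℝ] F) {M μ s : ℝ}
    (hA : ‖A‖ ≤ M * exp (-μ * s)) (x : E) :
    ‖A x‖ ^ 2 ≤ M ^ 2 * exp (-2 * μ * s) * ‖x‖ ^ 2 :=
  calc ‖A x‖ ^ 2 ≤ (‖A‖ * ‖x‖) ^ 2 := by gcongr; exact A.le_opNorm x
    _ ≤ (M * exp (-μ * s) * ‖x‖) ^ 2 := by gcongr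
    _ = M ^ 2 * exp (-2 * μ * s) * ‖x‖ ^ 2 := by
      rw [mul_pow, mul_pow, ← exp_nat_mul]; push_cast; ring_nf

theorem stmt_14_general
    {H : Type*} [NormedAddCommGroup H] [InnerProductSpace ℝ H]
    (S : ℝ → H →L[ℝ] H) (M μ : ℝ)
    (hSbound : ∀ s : ℝ, 0 ≤ s → ‖S s‖ ≤ M * Real.exp (-μ * s))
    (hScontr : ∀ s : ℝ, 0 ≤ s → ∀ x : H, ‖S s x‖ ≤ ‖x‖)
    (t : ℕ → ℝ) (ht0 : t 0 = 0) (htmono : StrictMono t)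
    (τ : ℝ) (hτ : 0 < τ)
    (B : ℕ → H →L[ℝ] H)
    (hT2nτ : ∀ n : ℕ, τ ≤ t (2*n+1) - t (2*n))
    (U : ℝ → H) (V : ℝ → H)
    (hUcont : ContinuousOn U (Set.Ici (0:ℝ)))
    (hUeven : ∀ n : ℕ, ∀ s ∈ Set.Icc (t (2*n)) (t (2*n+1)),
      U s = S (s - t (2*n)) (U (t (2*n))))
    (hUodd : ∀ n : ℕ, ∀ s ∈ Set.Ioo (t (2*n+1)) (t (2*n+2)),
      HasDerivAt U (V s + B n (U (s - τ))) s)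
    (hdiss : ∀ n : ℕ, ∀ s ∈ Set.Ioo (t (2*n+1)) (t (2*n+2)),
      (inner ℝ (U s) (V s) : ℝ) ≤ 0)
    :
    ∀ n : ℕ, ∀ r ∈ Set.Ico (t (2*n+1)) (t (2*n+2)),
      ‖U r‖^2 ≤
        Real.exp (2*‖B n‖*(t (2*n+2) - t (2*n+1))) *
          (M^2 * Real.exp (-2*μ*(t (2*n+1) - t (2*n))) + ‖B n‖*(t (2*n+2) - t (2*n+1))) *
          ‖U (t (2*n))‖^2 := by
  intro n r hr
  have hT : t (2*n) < t (2*n+1) := htmono (by omega)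
  have ht2n : 0 ≤ t (2*n) := ht0 ▸ htmono.monotone (Nat.zero_le _)
  set a := t (2*n+1)
  set c := t (2*n+2)
  set β := ‖B n‖
  set D := ‖U (t (2*n))‖ ^ 2
  have hstart : ‖U a‖ ^ 2 ≤ M ^ 2 * exp (-2*μ*(a - t (2*n))) * D := by
    rw [hUeven n a ⟨hT.le, le_rfl⟩]
    exact sq_norm_apply_le_of_opNorm_le_mul_exp _ (hSbound _ (by linarith)) _
  have hhist : ∀ s ∈ Ioo a c, s - τ < a → ‖U (s - τ)‖ ^ 2 ≤ D := by
    intro s hs hsτ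
    have hmem : s - τ ∈ Icc (t (2*n)) a := ⟨by linarith [hT2nτ n, hs.1], hsτ.le⟩
    rw [hUeven n _ hmem]
    exact pow_le_pow_left₀ (norm_nonneg _) (hScontr _ (by linarith [hmem.1]) _) 2
  have hbound := le_add_mul_mul_exp_of_delay_deriv_le (f := fun s => ‖U s‖ ^ 2) hτ.le
    (norm_nonneg (B n)) (norm_nonneg (B n)) (sq_nonneg _)
    ((hUcont.mono fun s hs => mem_Ici.2 (by linarith [hs.1])).norm.pow 2) (fun _ _ => sq_nonneg _)
    (fun s hs => (hUodd n s hs).norm_sq)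
    (fun s hs => by
      simpa only [mul_add] using two_mul_inner_add_apply_le (y := U (s - τ)) (B n) (hdiss n s hs))
    hhist r ⟨hr.1, hr.2.le⟩
  have hra : 0 ≤ r - a := sub_nonneg.2 hr.1
  have hrc : r - a ≤ c - a := by linarith [hr.2]
  have hβD : 0 ≤ β * D := by positivity
  calc ‖U r‖ ^ 2 ≤ (‖U a‖ ^ 2 + β * D * (r - a)) * exp ((β + β) * (r - a)) := hbound
    _ ≤ (M ^ 2 * exp (-2*μ*(a - t (2*n))) * D + β * D * (c - a)) * exp (2 * β * (c - a)) := by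
        gcongr ?_ * exp ?_
        · exact add_nonneg (by positivity) (mul_nonneg hβD (hra.trans hrc))
        · exact add_le_add hstart (mul_le_mul_of_nonneg_left hrc hβD)
        · linarith [mul_le_mul_of_nonneg_left hrc (norm_nonneg (B n))]
    _ = _ := by ring

theorem stmt_14
    {H : Type*} [NormedAddCommGroup H] [InnerProductSpace ℝ H]
    (S : ℝ → H →L[ℝ] H) (M μ : ℝ)
    (hM : 1 ≤ M) (hμ : 0 < μ)
    (hS0 : S 0 = ContinuousLinearMap.id ℝ H)
    (hSadd : ∀ s u : ℝ, 0 ≤ s → 0 ≤ u → S (s + u) = (S s).comp (S u))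
    (hScont : ∀ x : H, ContinuousOn (fun s => S s x) (Set.Ici (0:ℝ)))
    (hSbound : ∀ s : ℝ, 0 ≤ s → ‖S s‖ ≤ M * Real.exp (-μ * s))
    (hScontr : ∀ s : ℝ, 0 ≤ s → ∀ x : H, ‖S s x‖ ≤ ‖x‖)
    (t : ℕ → ℝ) (ht0 : t 0 = 0) (htmono : StrictMono t)
    (htlim : Filter.Tendsto t Filter.atTop Filter.atTop)
    (τ : ℝ) (hτ : 0 < τ)
    (B : ℕ → H →L[ℝ] H)
    (hT2nτ : ∀ n : ℕ, τ ≤ t (2*n+1) - t (2*n))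
    (hT2nstar : ∀ n : ℕ, Real.log M / μ < t (2*n+1) - t (2*n))
    (U : ℝ → H) (U₀ : H) (V : ℝ → H)
    (hUcont : ContinuousOn U (Set.Ici (0:ℝ))) (hU0 : U 0 = U₀)
    (hUeven : ∀ n : ℕ, ∀ s ∈ Set.Icc (t (2*n)) (t (2*n+1)),
      U s = S (s - t (2*n)) (U (t (2*n))))
    (hUodd : ∀ n : ℕ, ∀ s ∈ Set.Ioo (t (2*n+1)) (t (2*n+2)),
      HasDerivAt U (V s + B n (U (s - τ))) s)
    (hdiss : ∀ n : ℕ, ∀ s ∈ Set.Ioo (t (2*n+1)) (t (2*n+2)),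
      (inner ℝ (U s) (V s) : ℝ) ≤ 0)
    :
    ∀ n : ℕ, ∀ r ∈ Set.Ico (t (2*n+1)) (t (2*n+2)),
      ‖U r‖^2 ≤
        Real.exp (2*‖B n‖*(t (2*n+2) - t (2*n+1))) *
          (M^2 * Real.exp (-2*μ*(t (2*n+1) - t (2*n))) + ‖B n‖*(t (2*n+2) - t (2*n+1))) *
          ‖U (t (2*n))‖^2 :=
  stmt_14_general S M μ hSbound hScontr t ht0 htmono τ hτ B hT2nτ U V hUcont hUeven hUodd hdiss
end

section
/- Assume T_{2n+1} ≤ τ, T_{2n} ≥ τ and T_{2n} > T* for all n ∈ ℕ, and set c_n := M² e^{−2μ T_{2n}}. Then every trajectory U of the on–off delay system with initial datum U₀ satisfies, for every n ∈ ℕ, the iterated estimate ‖U(t_{2n+2})‖² ≤ [ ∏_{k=0}^{n} e^{B_{2k+1} T_{2k+1}} (c_k + 1 − e^{−B_{2k+1} T_{2k+1}}) ] · ‖U₀‖². -/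
/-!
While the feedback is off, the semigroup damps `‖U‖²` by the factor `M² e^{-2μ T_{2n}}`; since the
off phase lasts at least `τ` and the on phase at most `τ`, the delayed argument `U(s - τ)` in the
following on phase stays in the preceding off phase, where `S` is a contraction, so
`‖U(s - τ)‖² ≤ ‖U(t_{2n})‖²`. Dissipativity then gives `(‖U‖²)' ≤ ‖𝓑_{2n+1}‖ (‖U‖² + ‖U(t_{2n})‖²)` on the
on phase, and Grönwall's inequality bounds `‖U(t_{2n+2})‖²` by the `n`-th factor of the product
times `‖U(t_{2n})‖²`. Iterating over the periods gives the product.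
-/

open Real Set
open scoped InnerProductSpace

theorem add_le_exp_mul_add_of_hasDerivAt_le {f f' : ℝ → ℝ} {a b K C : ℝ} (hab : a ≤ b)
    (hf : ContinuousOn f (Icc a b)) (hf' : ∀ x ∈ Ioo a b, HasDerivAt f (f' x) x)
    (bound : ∀ x ∈ Ioo a b, f' x ≤ K * (f x + C)) :
    f b + C ≤ exp (K * (b - a)) * (f a + C) := by
  set g : ℝ → ℝ := fun x => exp (-K * x) * (f x + C) with hg
  have hg_anti : AntitoneOn g (Icc a b) := by
    refine antitoneOn_of_hasDerivWithinAt_nonpos (convex_Icc a b)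
      (f' := fun x => exp (-K * x) * (f' x - K * (f x + C))) ?_ ?_ ?_
    · exact (continuous_exp.comp (continuous_const_mul (-K))).continuousOn.mul
        (hf.add continuousOn_const)
    · rw [interior_Icc]
      intro x hx
      have hexp : HasDerivAt (fun y => exp (-K * y)) (exp (-K * x) * -K) x := by
        simpa using ((hasDerivAt_id x).const_mul (-K)).exp
      exact ((hexp.mul ((hf' x hx).add_const C)).congr_deriv (by ring)).hasDerivWithinAt
    · rw [interior_Icc]
      intro x hx
      exact mul_nonpos_of_nonneg_of_nonpos (exp_pos _).le (sub_nonpos.2 (bound x hx))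
  calc f b + C = exp (K * b) * g b := by rw [hg, ← mul_assoc, ← exp_add]; simp
    _ ≤ exp (K * b) * g a := by gcongr; exact hg_anti ⟨le_rfl, hab⟩ ⟨hab, le_rfl⟩ hab
    _ = exp (K * (b - a)) * (f a + C) := by rw [hg, ← mul_assoc, ← exp_add]; ring_nf

section Hilbert

variable {H : Type*} [NormedAddCommGroup H] [InnerProductSpace ℝ H]

theorem two_mul_inner_add_apply_le_s15 {u v w : H} {B : H →L[ℝ] H} {C : ℝ}
    (hv : ⟪u, v⟫_ℝ ≤ 0) (hw : ‖w‖ ^ 2 ≤ C) :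
    2 * ⟪u, v + B w⟫_ℝ ≤ ‖B‖ * (‖u‖ ^ 2 + C) := by
  have hBw : ⟪u, B w⟫_ℝ ≤ ‖B‖ * (‖u‖ * ‖w‖) :=
    calc ⟪u, B w⟫_ℝ ≤ ‖u‖ * ‖B w‖ := real_inner_le_norm _ _
      _ ≤ ‖u‖ * (‖B‖ * ‖w‖) := by gcongr; exact B.le_opNorm w
      _ = ‖B‖ * (‖u‖ * ‖w‖) := by ring
  have amgm : 2 * (‖u‖ * ‖w‖) ≤ ‖u‖ ^ 2 + C := by nlinarith [sq_nonneg (‖u‖ - ‖w‖)]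
  rw [inner_add_right]
  nlinarith [mul_le_mul_of_nonneg_left amgm (norm_nonneg B)]

theorem norm_sq_add_le_of_dissipative {U V W : ℝ → H} {B : H →L[ℝ] H} {a b C : ℝ} (hab : a ≤ b)
    (hU : ContinuousOn U (Icc a b)) (hU' : ∀ s ∈ Ioo a b, HasDerivAt U (V s + B (W s)) s)
    (hdiss : ∀ s ∈ Ioo a b, ⟪U s, V s⟫_ℝ ≤ 0) (hW : ∀ s ∈ Ioo a b, ‖W s‖ ^ 2 ≤ C) :
    ‖U b‖ ^ 2 + C ≤ exp (‖B‖ * (b - a)) * (‖U a‖ ^ 2 + C) :=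
  add_le_exp_mul_add_of_hasDerivAt_le hab (hU.norm.pow 2) (fun s hs => (hU' s hs).norm_sq)
    fun s hs => two_mul_inner_add_apply_le_s15 (hdiss s hs) (hW s hs)

theorem norm_sq_le_of_off_on_period {S : ℝ → H →L[ℝ] H} {M μ : ℝ}
    (hSbound : ∀ s : ℝ, 0 ≤ s → ‖S s‖ ≤ M * exp (-μ * s))
    (hScontr : ∀ s : ℝ, 0 ≤ s → ∀ x : H, ‖S s x‖ ≤ ‖x‖)
    {U V : ℝ → H} {B : H →L[ℝ] H} {c a b τ : ℝ} (hca : c ≤ a) (hab : a ≤ b)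
    (hon_le : b - a ≤ τ) (hoff_ge : τ ≤ a - c) (hU : ContinuousOn U (Icc a b))
    (hoff : ∀ s ∈ Icc c a, U s = S (s - c) (U c))
    (hon : ∀ s ∈ Ioo a b, HasDerivAt U (V s + B (U (s - τ))) s)
    (hdiss : ∀ s ∈ Ioo a b, ⟪U s, V s⟫_ℝ ≤ 0) :
    ‖U b‖ ^ 2 ≤ exp (‖B‖ * (b - a)) *
      (M ^ 2 * exp (-2 * μ * (a - c)) + 1 - exp (-‖B‖ * (b - a))) * ‖U c‖ ^ 2 := by
  have hdecay : ‖U a‖ ^ 2 ≤ M ^ 2 * exp (-2 * μ * (a - c)) * ‖U c‖ ^ 2 := by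
    have h : ‖U a‖ ≤ M * exp (-μ * (a - c)) * ‖U c‖ := by
      rw [hoff a ⟨hca, le_rfl⟩]
      exact (S _).le_of_opNorm_le (hSbound _ (sub_nonneg.2 hca)) _
    calc ‖U a‖ ^ 2 ≤ (M * exp (-μ * (a - c)) * ‖U c‖) ^ 2 := by gcongr
      _ = M ^ 2 * exp (-2 * μ * (a - c)) * ‖U c‖ ^ 2 := by
        rw [mul_pow, mul_pow, ← exp_nat_mul]; ring_nf
  have hdelay : ∀ s ∈ Ioo a b, ‖U (s - τ)‖ ^ 2 ≤ ‖U c‖ ^ 2 := fun s hs => by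
    rw [hoff (s - τ) ⟨by linarith [hs.1], by linarith [hs.2]⟩]
    gcongr
    exact hScontr _ (by linarith [hs.1]) _
  have hgronwall := norm_sq_add_le_of_dissipative hab hU hon hdiss hdelay
  have hexp : exp (‖B‖ * (b - a)) * exp (-‖B‖ * (b - a)) = 1 := by
    rw [← exp_add]; ring_nf; exact exp_zero
  calc ‖U b‖ ^ 2 ≤ exp (‖B‖ * (b - a)) * (‖U a‖ ^ 2 + ‖U c‖ ^ 2) - ‖U c‖ ^ 2 := by linarith
    _ ≤ exp (‖B‖ * (b - a)) * (M ^ 2 * exp (-2 * μ * (a - c)) * ‖U c‖ ^ 2 + ‖U c‖ ^ 2)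
        - ‖U c‖ ^ 2 := by gcongr
    _ = _ := by linear_combination ‖U c‖ ^ 2 * hexp

end Hilbert

theorem exp_mul_add_one_sub_exp_neg_mul_nonneg {K L m : ℝ} (hK : 0 ≤ K) (hL : 0 ≤ L)
    (hm : 0 ≤ m) : 0 ≤ exp (K * L) * (m + 1 - exp (-K * L)) := by
  have : exp (-K * L) ≤ 1 := exp_le_one_iff.2 (by nlinarith)
  exact mul_nonneg (exp_pos _).le (by linarith)

theorem le_prod_range_mul_of_le_mul {x r : ℕ → ℝ} (hr : ∀ k, 0 ≤ r k)
    (hx : ∀ k, x (k + 1) ≤ r k * x k) (n : ℕ) : x n ≤ (∏ k ∈ Finset.range n, r k) * x 0 := by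
  induction n with
  | zero => simp
  | succ n ih =>
    calc x (n + 1) ≤ r n * x n := hx n
      _ ≤ r n * ((∏ k ∈ Finset.range n, r k) * x 0) := by gcongr; exact hr n
      _ = (∏ k ∈ Finset.range (n + 1), r k) * x 0 := by rw [Finset.prod_range_succ]; ring

theorem stmt_15_general
    {H : Type*} [NormedAddCommGroup H] [InnerProductSpace ℝ H]
    (S : ℝ → H →L[ℝ] H) (M μ : ℝ)
    (hSbound : ∀ s : ℝ, 0 ≤ s → ‖S s‖ ≤ M * Real.exp (-μ * s))
    (hScontr : ∀ s : ℝ, 0 ≤ s → ∀ x : H, ‖S s x‖ ≤ ‖x‖)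
    (t : ℕ → ℝ) (ht0 : t 0 = 0) (htmono : StrictMono t)
    (τ : ℝ)
    (B : ℕ → H →L[ℝ] H)
    (hT2n1τ : ∀ n : ℕ, t (2*n+2) - t (2*n+1) ≤ τ)
    (hT2nτ : ∀ n : ℕ, τ ≤ t (2*n+1) - t (2*n))
    (U : ℝ → H) (U₀ : H) (V : ℝ → H)
    (hUcont : ContinuousOn U (Set.Ici (0:ℝ))) (hU0 : U 0 = U₀)
    (hUeven : ∀ n : ℕ, ∀ s ∈ Set.Icc (t (2*n)) (t (2*n+1)),
      U s = S (s - t (2*n)) (U (t (2*n))))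
    (hUodd : ∀ n : ℕ, ∀ s ∈ Set.Ioo (t (2*n+1)) (t (2*n+2)),
      HasDerivAt U (V s + B n (U (s - τ))) s)
    (hdiss : ∀ n : ℕ, ∀ s ∈ Set.Ioo (t (2*n+1)) (t (2*n+2)),
      (inner ℝ (U s) (V s) : ℝ) ≤ 0)
    :
    ∀ n : ℕ,
      ‖U (t (2*n+2))‖^2 ≤
        (∏ k ∈ Finset.range (n+1),
          Real.exp (‖B k‖*(t (2*k+2) - t (2*k+1))) *
            (M^2 * Real.exp (-2*μ*(t (2*k+1) - t (2*k))) + 1 -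
              Real.exp (-‖B k‖*(t (2*k+2) - t (2*k+1))))) *
          ‖U₀‖^2 := by
  intro n
  have ht_nonneg (m : ℕ) : 0 ≤ t m := ht0 ▸ htmono.monotone (Nat.zero_le m)
  have hfactor (k : ℕ) := exp_mul_add_one_sub_exp_neg_mul_nonneg (norm_nonneg (B k))
    (sub_nonneg.2 (htmono (by omega : 2*k+1 < 2*k+2)).le)
    (by positivity : 0 ≤ M^2 * Real.exp (-2*μ*(t (2*k+1) - t (2*k))))
  have hperiod (k : ℕ) := norm_sq_le_of_off_on_period hSbound hScontr
    (htmono (by omega : 2*k < 2*k+1)).le (htmono (by omega : 2*k+1 < 2*k+2)).le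
    (hT2n1τ k) (hT2nτ k) (hUcont.mono fun s hs => (ht_nonneg _).trans hs.1)
    (hUeven k) (hUodd k) (hdiss k)
  simpa [ht0, hU0, mul_add] using
    le_prod_range_mul_of_le_mul (x := fun k => ‖U (t (2*k))‖^2) hfactor hperiod (n+1)

theorem stmt_15
    {H : Type*} [NormedAddCommGroup H] [InnerProductSpace ℝ H]
    (S : ℝ → H →L[ℝ] H) (M μ : ℝ)
    (hM : 1 ≤ M) (hμ : 0 < μ)
    (hS0 : S 0 = ContinuousLinearMap.id ℝ H)
    (hSadd : ∀ s u : ℝ, 0 ≤ s → 0 ≤ u → S (s + u) = (S s).comp (S u))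
    (hScont : ∀ x : H, ContinuousOn (fun s => S s x) (Set.Ici (0:ℝ)))
    (hSbound : ∀ s : ℝ, 0 ≤ s → ‖S s‖ ≤ M * Real.exp (-μ * s))
    (hScontr : ∀ s : ℝ, 0 ≤ s → ∀ x : H, ‖S s x‖ ≤ ‖x‖)
    (t : ℕ → ℝ) (ht0 : t 0 = 0) (htmono : StrictMono t)
    (htlim : Filter.Tendsto t Filter.atTop Filter.atTop)
    (τ : ℝ) (hτ : 0 < τ)
    (B : ℕ → H →L[ℝ] H)
    (hT2n1τ : ∀ n : ℕ, t (2*n+2) - t (2*n+1) ≤ τ)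
    (hT2nτ : ∀ n : ℕ, τ ≤ t (2*n+1) - t (2*n))
    (hT2nstar : ∀ n : ℕ, Real.log M / μ < t (2*n+1) - t (2*n))
    (U : ℝ → H) (U₀ : H) (V : ℝ → H)
    (hUcont : ContinuousOn U (Set.Ici (0:ℝ))) (hU0 : U 0 = U₀)
    (hUeven : ∀ n : ℕ, ∀ s ∈ Set.Icc (t (2*n)) (t (2*n+1)),
      U s = S (s - t (2*n)) (U (t (2*n))))
    (hUodd : ∀ n : ℕ, ∀ s ∈ Set.Ioo (t (2*n+1)) (t (2*n+2)),
      HasDerivAt U (V s + B n (U (s - τ))) s)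
    (hdiss : ∀ n : ℕ, ∀ s ∈ Set.Ioo (t (2*n+1)) (t (2*n+2)),
      (inner ℝ (U s) (V s) : ℝ) ≤ 0)
    :
    ∀ n : ℕ,
      ‖U (t (2*n+2))‖^2 ≤
        (∏ k ∈ Finset.range (n+1),
          Real.exp (‖B k‖*(t (2*k+2) - t (2*k+1))) *
            (M^2 * Real.exp (-2*μ*(t (2*k+1) - t (2*k))) + 1 -
              Real.exp (-‖B k‖*(t (2*k+2) - t (2*k+1))))) *
          ‖U₀‖^2 :=
  stmt_15_general S M μ hSbound hScontr t ht0 htmono τ B hT2n1τ hT2nτ U U₀ V hUcont hU0 hUeven hUodd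
    hdiss
end

section
/- Assume T_{2n} > T* for all n ∈ ℕ and set c_n := M² e^{−2μ T_{2n}}. Then every trajectory U of the on–off anti-damped system with initial datum U₀ satisfies, for every n ∈ ℕ, the iterated estimate ‖U(t_{2n+2})‖² ≤ [ ∏_{k=0}^{n} e^{2 D_{2k+1} T_{2k+1}} c_k ] · ‖U₀‖². -/
/-!
Each period contributes one factor. On the even interval `U = S(· - t_{2n}) U(t_{2n})`, so
`‖S(s)‖ ≤ M e^{-μ s}` gives the factor `c_n`. On the odd interval dissipativity leaves
`⟪U, U'⟫ ≤ ‖𝓓‖ ‖U‖²`, so `e^{-2‖𝓓‖s} ‖U(s)‖²` is antitone, which gives the factor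
`e^{2 D_{2n+1} T_{2n+1}}`.
-/

open Real Set Finset
open scoped InnerProductSpace

lemma le_prod_range_mul_of_le_mul_s16 {x c : ℕ → ℝ} (hc : ∀ n, 0 ≤ c n)
    (hstep : ∀ n, x (n + 1) ≤ c n * x n) (n : ℕ) :
    x n ≤ (∏ k ∈ range n, c k) * x 0 := by
  induction n with
  | zero => simp
  | succ n ih =>
    calc x (n + 1) ≤ c n * x n := hstep n
      _ ≤ c n * ((∏ k ∈ range n, c k) * x 0) := mul_le_mul_of_nonneg_left ih (hc n)
      _ = (∏ k ∈ range (n + 1), c k) * x 0 := by rw [prod_range_succ]; ring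

section

variable {E : Type*} [NormedAddCommGroup E] [InnerProductSpace ℝ E]

lemma real_inner_apply_le_opNorm_mul_norm_sq (A : E →L[ℝ] E) (x : E) :
    ⟪x, A x⟫_ℝ ≤ ‖A‖ * ‖x‖ ^ 2 :=
  calc ⟪x, A x⟫_ℝ ≤ ‖x‖ * ‖A x‖ := real_inner_le_norm _ _
    _ ≤ ‖x‖ * (‖A‖ * ‖x‖) := mul_le_mul_of_nonneg_left (A.le_opNorm x) (norm_nonneg x)
    _ = ‖A‖ * ‖x‖ ^ 2 := by ring

lemma norm_sq_apply_le_of_opNorm_le {A : E →L[ℝ] E} {C : ℝ} (hA : ‖A‖ ≤ C) (x : E) :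
    ‖A x‖ ^ 2 ≤ C ^ 2 * ‖x‖ ^ 2 := by
  rw [← mul_pow]
  exact pow_le_pow_left₀ (norm_nonneg _) ((A.le_opNorm x).trans (by gcongr)) 2

lemma norm_sq_le_exp_mul_of_inner_deriv_le {u u' : ℝ → E} {K a b : ℝ} (hab : a ≤ b)
    (hu : ContinuousOn u (Icc a b)) (hderiv : ∀ s ∈ Ioo a b, HasDerivAt u (u' s) s)
    (hbound : ∀ s ∈ Ioo a b, ⟪u s, u' s⟫_ℝ ≤ K * ‖u s‖ ^ 2) :
    ‖u b‖ ^ 2 ≤ exp (2 * K * (b - a)) * ‖u a‖ ^ 2 := by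
  set g : ℝ → ℝ := fun s => exp (-(2 * K) * s) * ‖u s‖ ^ 2
  have hg_anti : AntitoneOn g (Icc a b) := by
    refine antitoneOn_of_hasDerivWithinAt_nonpos (convex_Icc a b) (f' := fun s =>
        -(2 * K) * exp (-(2 * K) * s) * ‖u s‖ ^ 2 + exp (-(2 * K) * s) * (2 * ⟪u s, u' s⟫_ℝ))
      ((continuous_exp.comp (continuous_const_mul _)).continuousOn.mul (hu.norm.pow 2))
      (fun s hs => ?_) (fun s hs => ?_) <;> rw [interior_Icc] at hs
    · have hexp : HasDerivAt (fun s => exp (-(2 * K) * s)) (-(2 * K) * exp (-(2 * K) * s)) s := by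
        simpa [mul_comm] using ((hasDerivAt_id s).const_mul (-(2 * K))).exp
      exact (hexp.mul (hderiv s hs).norm_sq).hasDerivWithinAt
    · nlinarith [hbound s hs, exp_pos (-(2 * K) * s)]
  have hgab : g b ≤ g a := hg_anti ⟨le_rfl, hab⟩ ⟨hab, le_rfl⟩ hab
  calc ‖u b‖ ^ 2 = exp (2 * K * b) * g b := by
        simp only [g, ← mul_assoc, ← exp_add]; ring_nf; simp
    _ ≤ exp (2 * K * b) * g a := mul_le_mul_of_nonneg_left hgab (exp_pos _).le
    _ = exp (2 * K * (b - a)) * ‖u a‖ ^ 2 := by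
        simp only [g, ← mul_assoc, ← exp_add]; ring_nf

end

theorem stmt_16_general
    {H : Type*} [NormedAddCommGroup H] [InnerProductSpace ℝ H]
    (S : ℝ → H →L[ℝ] H) (M μ : ℝ)
    (hSbound : ∀ s : ℝ, 0 ≤ s → ‖S s‖ ≤ M * Real.exp (-μ * s))
    (t : ℕ → ℝ) (ht0 : t 0 = 0) (htmono : StrictMono t)
    (D : ℕ → H →L[ℝ] H)
    (U : ℝ → H) (U₀ : H) (V : ℝ → H)
    (hUcont : ContinuousOn U (Set.Ici (0:ℝ))) (hU0 : U 0 = U₀)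
    (hUeven : ∀ n : ℕ, ∀ s ∈ Set.Icc (t (2*n)) (t (2*n+1)),
      U s = S (s - t (2*n)) (U (t (2*n))))
    (hUodd : ∀ n : ℕ, ∀ s ∈ Set.Ioo (t (2*n+1)) (t (2*n+2)),
      HasDerivAt U (V s + D n (U s)) s)
    (hdiss : ∀ n : ℕ, ∀ s ∈ Set.Ioo (t (2*n+1)) (t (2*n+2)),
      (inner ℝ (U s) (V s) : ℝ) ≤ 0)
    :
    ∀ n : ℕ,
      ‖U (t (2*n+2))‖^2 ≤
        (∏ k ∈ Finset.range (n+1),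
          Real.exp (2*‖D k‖*(t (2*k+2) - t (2*k+1))) *
            (M^2 * Real.exp (-2*μ*(t (2*k+1) - t (2*k))))) *
          ‖U₀‖^2 := by
  have even_step (n : ℕ) :
      ‖U (t (2*n+1))‖^2 ≤ M^2 * exp (-2*μ*(t (2*n+1) - t (2*n))) * ‖U (t (2*n))‖^2 := by
    have hT : 0 ≤ t (2*n+1) - t (2*n) := sub_nonneg.2 (htmono (by omega)).le
    rw [hUeven n _ ⟨(htmono (by omega)).le, le_rfl⟩]
    refine (norm_sq_apply_le_of_opNorm_le (hSbound _ hT) _).trans_eq ?_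
    rw [mul_pow, ← exp_nat_mul]
    ring_nf
  have odd_step (n : ℕ) :
      ‖U (t (2*n+2))‖^2 ≤ exp (2*‖D n‖*(t (2*n+2) - t (2*n+1))) * ‖U (t (2*n+1))‖^2 := by
    have ht_nonneg : 0 ≤ t (2*n+1) := ht0 ▸ htmono.monotone (Nat.zero_le _)
    refine norm_sq_le_exp_mul_of_inner_deriv_le (htmono (by omega)).le
      (hUcont.mono fun s hs => ht_nonneg.trans hs.1) (hUodd n) fun s hs => ?_
    rw [inner_add_right]
    linarith [hdiss n s hs, real_inner_apply_le_opNorm_mul_norm_sq (D n) (U s)]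
  intro n
  have hchain := le_prod_range_mul_of_le_mul_s16 (x := fun n => ‖U (t (2*n))‖^2)
    (c := fun k => exp (2*‖D k‖*(t (2*k+2) - t (2*k+1))) * (M^2 * exp (-2*μ*(t (2*k+1) - t (2*k)))))
    (fun k => by positivity)
    (fun k => (odd_step k).trans (mul_le_mul_of_nonneg_left (even_step k) (exp_pos _).le)
      |>.trans_eq (by ring)) (n + 1)
  simpa [ht0, hU0, mul_add] using hchain

theorem stmt_16
    {H : Type*} [NormedAddCommGroup H] [InnerProductSpace ℝ H]
    (S : ℝ → H →L[ℝ] H) (M μ : ℝ)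
    (hM : 1 ≤ M) (hμ : 0 < μ)
    (hS0 : S 0 = ContinuousLinearMap.id ℝ H)
    (hSadd : ∀ s u : ℝ, 0 ≤ s → 0 ≤ u → S (s + u) = (S s).comp (S u))
    (hScont : ∀ x : H, ContinuousOn (fun s => S s x) (Set.Ici (0:ℝ)))
    (hSbound : ∀ s : ℝ, 0 ≤ s → ‖S s‖ ≤ M * Real.exp (-μ * s))
    (hScontr : ∀ s : ℝ, 0 ≤ s → ∀ x : H, ‖S s x‖ ≤ ‖x‖)
    (t : ℕ → ℝ) (ht0 : t 0 = 0) (htmono : StrictMono t)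
    (htlim : Filter.Tendsto t Filter.atTop Filter.atTop)
    (D : ℕ → H →L[ℝ] H)
    (hDpos : ∀ (n : ℕ) (x : H), (0:ℝ) ≤ inner ℝ (D n x) x)
    (hT2nstar : ∀ n : ℕ, Real.log M / μ < t (2*n+1) - t (2*n))
    (U : ℝ → H) (U₀ : H) (V : ℝ → H)
    (hUcont : ContinuousOn U (Set.Ici (0:ℝ))) (hU0 : U 0 = U₀)
    (hUeven : ∀ n : ℕ, ∀ s ∈ Set.Icc (t (2*n)) (t (2*n+1)),
      U s = S (s - t (2*n)) (U (t (2*n))))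
    (hUodd : ∀ n : ℕ, ∀ s ∈ Set.Ioo (t (2*n+1)) (t (2*n+2)),
      HasDerivAt U (V s + D n (U s)) s)
    (hdiss : ∀ n : ℕ, ∀ s ∈ Set.Ioo (t (2*n+1)) (t (2*n+2)),
      (inner ℝ (U s) (V s) : ℝ) ≤ 0)
    :
    ∀ n : ℕ,
      ‖U (t (2*n+2))‖^2 ≤
        (∏ k ∈ Finset.range (n+1),
          Real.exp (2*‖D k‖*(t (2*k+2) - t (2*k+1))) *
            (M^2 * Real.exp (-2*μ*(t (2*k+1) - t (2*k))))) *
          ‖U₀‖^2 :=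
  stmt_16_general S M μ hSbound t ht0 htmono D U U₀ V hUcont hU0 hUeven hUodd hdiss
end

section
/- Let (β_n)_{n∈ℕ} and (θ_n)_{n∈ℕ} be sequences of nonnegative real numbers and (c_n)_{n∈ℕ} a sequence in (0,1). If ∑_{n=0}^∞ β_n θ_n < +∞ and the partial sums ∑_{n=0}^{N} ln c_n tend to −∞ as N → ∞, then the partial sums ∑_{n=0}^{N} ln[ e^{β_n θ_n} (c_n + 1 − e^{−β_n θ_n}) ] tend to −∞ as N → ∞. -/
open Filter Finset Real

theorem stmt_aux
    (x : ℕ → ℝ) (hx : ∀ n, 0 ≤ x n)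
    (c : ℕ → ℝ) (hc : ∀ n, c n ∈ Set.Ioo (0:ℝ) 1)
    (hsum : Summable x)
    (hdiv : Filter.Tendsto (fun N => ∑ n ∈ Finset.range (N+1), Real.log (c n))
      Filter.atTop Filter.atBot) :
    Filter.Tendsto
      (fun N => ∑ n ∈ Finset.range (N+1),
        Real.log (Real.exp (x n) * (c n + 1 - Real.exp (-(x n)))))
      Filter.atTop Filter.atBot := by
  have ht : ∀ n, 0 < c n + 1 - Real.exp (-(x n)) := by
    intro n
    have h1 : Real.exp (-(x n)) ≤ 1 := Real.exp_le_one_iff.2 (by linarith [hx n])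
    linarith [(hc n).1]
  set L : ℕ → ℝ := fun n => Real.log (c n + 1 - Real.exp (-(x n))) with hLdef
  -- L n ≤ x n
  have hLle : ∀ n, L n ≤ x n := by
    intro n
    have h1 : 1 + x n ≤ Real.exp (x n) := by linarith [Real.add_one_le_exp (x n)]
    have h2 : 1 - x n ≤ Real.exp (-(x n)) := by linarith [Real.add_one_le_exp (-(x n))]
    have harg : c n + 1 - Real.exp (-(x n)) ≤ Real.exp (x n) := by
      nlinarith [(hc n).2, Real.exp_pos (x n), Real.exp_pos (-(x n)),
        Real.exp_neg (x n), mul_pos (Real.exp_pos (x n)) (Real.exp_pos (-(x n)))]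
    calc L n ≤ Real.log (Real.exp (x n)) := Real.log_le_log (ht n) harg
      _ = x n := Real.log_exp _
  -- rewrite summand
  have hterm : ∀ n, Real.log (Real.exp (x n) * (c n + 1 - Real.exp (-(x n)))) = x n + L n := by
    intro n
    rw [Real.log_mul (Real.exp_ne_zero _) (ne_of_gt (ht n)), Real.log_exp]
  have hXle : ∀ N, ∑ n ∈ Finset.range N, x n ≤ ∑' n, x n :=
    fun N => Summable.sum_le_tsum _ (fun i _ => hx i) hsum
  -- main claim
  have hS : Filter.Tendsto (fun N => ∑ n ∈ Finset.range (N+1), L n) Filter.atTop Filter.atBot := by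
    by_contra h
    rw [tendsto_atBot] at h
    push_neg at h
    obtain ⟨b, hb⟩ := h
    rw [Filter.frequently_atTop] at hb
    -- summability of x - L
    have hD : Summable (fun n => x n - L n) := by
      apply summable_of_sum_range_le (c := (∑' n, x n) - b) (fun n => by linarith [hLle n])
      intro N
      obtain ⟨N', hN', hbN'⟩ := hb N
      have hsub : ∑ n ∈ Finset.range N, (x n - L n) ≤ ∑ n ∈ Finset.range (N'+1), (x n - L n) :=
        Finset.sum_le_sum_of_subset_of_nonneg
          (Finset.range_subset_range.2 (by omega)) (fun i _ _ => by linarith [hLle i])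
      have : ∑ n ∈ Finset.range (N'+1), (x n - L n)
          = (∑ n ∈ Finset.range (N'+1), x n) - ∑ n ∈ Finset.range (N'+1), L n := by
        rw [Finset.sum_sub_distrib]
      linarith [hXle (N'+1)]
    have hLsum : Summable L := by
      have := hsum.sub hD
      simpa using this
    have hL0 : Filter.Tendsto L Filter.atTop (nhds 0) := hLsum.tendsto_atTop_zero
    have hx0 : Filter.Tendsto x Filter.atTop (nhds 0) := hsum.tendsto_atTop_zero
    -- eventually bounds
    have hev : ∀ᶠ n in atTop, Real.log (c n) ≥ L n - 4 * x n := by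
      have h1 : ∀ᶠ n in atTop, L n ≥ -(1/2) := by
        have := hL0.eventually (eventually_ge_nhds (show -(1/2:ℝ) < 0 by norm_num))
        exact this
      have h2 : ∀ᶠ n in atTop, x n ≤ 1/8 := by
        have := hx0.eventually (eventually_le_nhds (show (0:ℝ) < 1/8 by norm_num))
        exact this
      filter_upwards [h1, h2] with n hL12 hx18
      -- key pointwise inequality
      rw [ge_iff_le, Real.le_log_iff_exp_le (hc n).1]
      have hE : Real.exp (L n) = c n + 1 - Real.exp (-(x n)) := Real.exp_log (ht n)
      have hE12 : (1:ℝ)/2 ≤ Real.exp (L n) := by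
        have he : Real.exp (-(1/2:ℝ)) ≤ Real.exp (L n) := Real.exp_le_exp.2 hL12
        have h2e : Real.exp (1/2:ℝ) ≤ 2 := by
          nlinarith [Real.exp_one_lt_d9, Real.exp_pos (1/2:ℝ),
            Real.exp_add (1/2:ℝ) (1/2:ℝ), Real.exp_pos (1:ℝ)]
        have : Real.exp (-(1/2:ℝ)) = (Real.exp (1/2:ℝ))⁻¹ := Real.exp_neg _
        rw [this] at he
        have := Real.exp_pos (1/2:ℝ)
        calc (1:ℝ)/2 ≤ (Real.exp (1/2:ℝ))⁻¹ := by
              rw [le_inv_comm₀ (by norm_num) this]; linarith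
          _ ≤ Real.exp (L n) := he
      have hcx : Real.exp (L n) - x n ≤ c n := by
        have h3 : 1 - Real.exp (-(x n)) ≤ x n := by
          linarith [Real.add_one_le_exp (-(x n))]
        linarith
      -- exp (L n - 4 x n) ≤ c n
      rw [show L n - 4 * x n = L n + (-(4 * x n)) by ring, Real.exp_add, Real.exp_neg,
        mul_inv_le_iff₀ (Real.exp_pos _)]
      have h4 : 1 + 4 * x n ≤ Real.exp (4 * x n) := by
        linarith [Real.add_one_le_exp (4 * x n)]
      have hc38 : (3:ℝ)/8 ≤ c n := by linarith
      have hcc : c n * (1 + 4 * x n) ≤ c n * Real.exp (4 * x n) :=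
        mul_le_mul_of_nonneg_left h4 (hc n).1.le
      nlinarith [mul_le_mul_of_nonneg_left hc38 (hx n)]
    -- lower bound on B_N, contradiction
    rw [Filter.eventually_atTop] at hev
    obtain ⟨N₁, hN₁⟩ := hev
    set d : ℕ → ℝ := fun n => Real.log (c n) - (L n - 4 * x n) with hddef
    set K : ℝ := ∑ n ∈ Finset.range N₁, d n with hKdef
    -- S_N bounded below
    have hStend : Filter.Tendsto (fun N => ∑ n ∈ Finset.range (N+1), L n) Filter.atTop
        (nhds (∑' n, L n)) := hLsum.hasSum.tendsto_sum_nat.comp (tendsto_add_atTop_nat 1)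
    obtain ⟨m, hm⟩ := hStend.bddBelow_range
    have hmle : ∀ N, m ≤ ∑ n ∈ Finset.range (N+1), L n := fun N => hm ⟨N, rfl⟩
    set X : ℝ := ∑' n, x n with hXdef
    have hkey : ∀ N ≥ N₁, K + (m - 4 * X) ≤ ∑ n ∈ Finset.range (N+1), Real.log (c n) := by
      intro N hN
      have hd : K ≤ ∑ n ∈ Finset.range (N+1), d n := by
        apply Finset.sum_le_sum_of_subset_of_nonneg (Finset.range_subset_range.2 (by omega))
        intro i _ hi
        have : N₁ ≤ i := Nat.le_of_not_lt (fun h => hi (Finset.mem_range.2 h))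
        have := hN₁ i this
        simp only [hddef]
        linarith
      have hexp : ∑ n ∈ Finset.range (N+1), d n
          = (∑ n ∈ Finset.range (N+1), Real.log (c n))
            - (∑ n ∈ Finset.range (N+1), L n) + 4 * ∑ n ∈ Finset.range (N+1), x n := by
        simp only [hddef]
        rw [Finset.sum_sub_distrib, Finset.sum_sub_distrib, Finset.mul_sum]
        ring
      have hX4 : ∑ n ∈ Finset.range (N+1), x n ≤ X := hXle (N+1)
      have hS4 : m ≤ ∑ n ∈ Finset.range (N+1), L n := hmle N
      nlinarith [hd, hexp]
    obtain ⟨N, hNa, hNb⟩ := ((Filter.tendsto_atBot.mp hdiv (K + (m - 4*X) - 1)).and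
      (Filter.eventually_ge_atTop N₁)).exists
    linarith [hkey N hNb]
  -- conclude from hS
  have hfun : ∀ N, ∑ n ∈ Finset.range (N+1),
      Real.log (Real.exp (x n) * (c n + 1 - Real.exp (-(x n))))
      ≤ (∑' n, x n) + ∑ n ∈ Finset.range (N+1), L n := by
    intro N
    have : ∑ n ∈ Finset.range (N+1),
        Real.log (Real.exp (x n) * (c n + 1 - Real.exp (-(x n))))
        = (∑ n ∈ Finset.range (N+1), x n) + ∑ n ∈ Finset.range (N+1), L n := by
      rw [← Finset.sum_add_distrib]
      exact Finset.sum_congr rfl (fun n _ => hterm n)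
    rw [this]
    linarith [hXle (N+1)]
  exact tendsto_atBot_mono hfun (tendsto_atBot_add_const_left _ _ hS)


theorem stmt_18
    (β θ : ℕ → ℝ) (hβ : ∀ n, 0 ≤ β n) (hθ : ∀ n, 0 ≤ θ n)
    (c : ℕ → ℝ) (hc : ∀ n, c n ∈ Set.Ioo (0:ℝ) 1)
    (hsum : Summable (fun n => β n * θ n))
    (hdiv : Filter.Tendsto (fun N => ∑ n ∈ Finset.range (N+1), Real.log (c n))
      Filter.atTop Filter.atBot)
    :
    Filter.Tendsto
      (fun N => ∑ n ∈ Finset.range (N+1),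
        Real.log (Real.exp (β n*θ n) * (c n + 1 - Real.exp (-(β n*θ n)))))
      Filter.atTop Filter.atBot := by
  exact stmt_aux (fun n => β n * θ n) (fun n => mul_nonneg (hβ n) (hθ n)) c hc hsum hdiv
end
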